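/- Let Σ be a finite set of single-headed GTGDs strongly obeying a side signature S', and let Σ' be any childish saturation of Σ. Then the shortcut chase based on Σ' emulates Σ on any Σ-fact-saturated instance: for each Σ-fact-saturated instance I and each Boolean conjunctive query Q, I,Σ ⊨ Q if and only if Q holds in an instance produced from I by a shortcut chase sequence starting at I. -/

import Mathlib

namespace GTGDPaper

/-! ## Basic syntax: atoms, facts, TGDs, CQs -/

/-- An atom: a relation name together with a list of arguments.
Arguments are natural numbers, read as variables in rule atoms
and as domain elements in facts. -/
structure Atom where
  rel : ℕ
  args : List ℕ
deriving DecidableEq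

/-- A fact is an atom whose arguments are read as domain elements. -/
abbrev Fact := Atom

/-- The variables (resp. domain elements) occurring in an atom (resp. fact). -/
def Atom.vars (A : Atom) : Finset ℕ := A.args.toFinset

/-- Apply a substitution to an atom (also used to instantiate atoms into facts and to
rename the elements of facts). -/
def Atom.rename (σ : ℕ → ℕ) (A : Atom) : Atom := ⟨A.rel, A.args.map σ⟩

/-- The active domain of a finite set of facts. -/
def adomF (I : Finset Fact) : Finset ℕ := I.biUnion Atom.vars

/-- A single-headed tuple-generating dependency (TGD):
`∀ x⃗ (body → ∃ y⃗ head)` where the existential variables are the variables of the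
head not occurring in the body. -/
structure TGD where
  body : List Atom
  head : Atom
deriving DecidableEq

def TGD.bodyVars (τ : TGD) : Finset ℕ := τ.body.foldr (fun A s => A.vars ∪ s) ∅

/-- Exported (frontier) variables: the variables occurring both in the body and the head. -/
def TGD.exported (τ : TGD) : Finset ℕ := τ.head.vars ∩ τ.bodyVars

/-- The width of a TGD: its number of exported variables. -/
def TGD.width (τ : TGD) : ℕ := τ.exported.card

/-- The existentially quantified variables of a TGD. -/
def TGD.existVars (τ : TGD) : Finset ℕ := τ.head.vars \ τ.bodyVars

/-- A full TGD: no existentially quantified variable in the head. -/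
def TGD.isFull (τ : TGD) : Prop := τ.head.vars ⊆ τ.bodyVars

/-- A linear TGD: the body is a single atom. -/
def TGD.linear (τ : TGD) : Prop := τ.body.length = 1

/-- `A` is a guard of `τ`: a body atom containing all body variables. -/
def isGuard (τ : TGD) (A : Atom) : Prop := A ∈ τ.body ∧ τ.bodyVars ⊆ A.vars

/-- A guarded TGD (GTGD). -/
def TGD.guarded (τ : TGD) : Prop := ∃ A, isGuard τ A

/-- Satisfaction of a TGD by a (possibly infinite) instance, with active-domain semantics:
every trigger of the body extends to a match of the head. -/
def TGD.holdsIn (τ : TGD) (I : Set Fact) : Prop :=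
  ∀ σ : ℕ → ℕ, (∀ A ∈ τ.body, A.rename σ ∈ I) →
    ∃ σ' : ℕ → ℕ, (∀ v ∈ τ.bodyVars, σ' v = σ v) ∧ τ.head.rename σ' ∈ I

/-- A Boolean conjunctive query: a list of atoms, all of whose variables are
existentially quantified. -/
abbrev CQ := List Atom

/-- A Boolean CQ holds in an instance if it has a match there. -/
def CQholds (Q : CQ) (I : Set Fact) : Prop :=
  ∃ σ : ℕ → ℕ, ∀ A ∈ Q, A.rename σ ∈ I

/-- Open-world query answering entailment, with the theory given as a predicate on TGDs. -/
def entailsQS (I0 : Set Fact) (R : TGD → Prop) (Q : CQ) : Prop :=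
  ∀ J : Set Fact, I0 ⊆ J → (∀ τ, R τ → τ.holdsIn J) → CQholds Q J

/-- `I0, Σ ⊨ Q` : the Boolean CQ `Q` has a match in every superinstance of `I0`
satisfying all TGDs of `Th`. -/
def entailsQ (I0 : Finset Fact) (Th : Finset TGD) (Q : CQ) : Prop :=
  entailsQS ↑I0 (· ∈ Th) Q

/-- `I0, Σ ⊨ F` : the fact `F` belongs to every superinstance of `I0` satisfying `Th`. -/
def entailsF (I0 : Finset Fact) (Th : Finset TGD) (F : Fact) : Prop :=
  ∀ J : Set Fact, ↑I0 ⊆ J → (∀ τ ∈ Th, τ.holdsIn J) → F ∈ J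

/-- Logical entailment of a TGD by a set of TGDs. -/
def logEntails (Th : Finset TGD) (τ : TGD) : Prop :=
  ∀ J : Set Fact, (∀ γ ∈ Th, γ.holdsIn J) → τ.holdsIn J

/-! ## Signatures -/

/-- A relational signature: a finite set of relation names with their arities. -/
structure Sig where
  rels : Finset ℕ
  ar : ℕ → ℕ

/-- The arity of a signature: maximal arity of its relations. -/
def Sig.arity (S : Sig) : ℕ := S.rels.sup S.ar

def Sig.wfAtom (S : Sig) (A : Atom) : Prop := A.rel ∈ S.rels ∧ A.args.length = S.ar A.rel

def Sig.wfTGD (S : Sig) (τ : TGD) : Prop := (∀ A ∈ τ.body, S.wfAtom A) ∧ S.wfAtom τ.head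

/-! ## Side signatures -/

/-- A GTGD obeys side signature `S'` if for some choice of guard atom in its body,
all other body atoms are on relations of `S'`. -/
def TGD.obeys (τ : TGD) (S' : Finset ℕ) : Prop :=
  ∃ A, isGuard τ A ∧ ∀ B ∈ τ.body, B = A ∨ B.rel ∈ S'

/-- A principal guard: a guard atom on a principal (non-side) relation. -/
def isPrincipalGuard (S' : Finset ℕ) (τ : TGD) (A : Atom) : Prop :=
  isGuard τ A ∧ A.rel ∉ S'

/-- Renaming of the exported variables of a TGD by a function `h`
(identity on the other variables). -/
def TGD.renameExported (τ : TGD) (h : ℕ → ℕ) : TGD :=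
  ⟨τ.body.map (Atom.rename fun v => if v ∈ τ.exported then h v else v),
   (Atom.rename fun v => if v ∈ τ.exported then h v else v) τ.head⟩

/-- Homomorphism-closure: the set of GTGDs is closed under maps identifying
exported variables. -/
def homClosed (Th : Finset TGD) : Prop :=
  ∀ τ ∈ Th, ∀ h : ℕ → ℕ, (∀ v ∈ τ.exported, h v ∈ τ.exported) →
    τ.renameExported h ∈ Th

/-- A set of GTGDs strongly obeys side signature `S'`: it obeys `S'`,
is homomorphism-closed, every GTGD has exactly one principal guard, and
every non-full GTGD has a principal head atom. -/
def stronglyObeys (Th : Finset TGD) (S' : Finset ℕ) : Prop :=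
  (∀ τ ∈ Th, τ.obeys S') ∧
  homClosed Th ∧
  (∀ τ ∈ Th, ∃! A : Atom, isPrincipalGuard S' τ A) ∧
  (∀ τ ∈ Th, ¬ τ.isFull → τ.head.rel ∉ S')

/-- Maximal width of a finite set of TGDs. -/
def maxWidth (Th : Finset TGD) : ℕ := Th.sup TGD.width

/-! ## Emulation -/

/-- `I0', Th'` emulates `I0, Th` on signature `S`: the two pairs entail the same
Boolean CQs over `S`. -/
def emulates (I0' : Finset Fact) (Th' : Finset TGD) (I0 : Finset Fact) (Th : Finset TGD)
    (S : Sig) : Prop :=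
  ∀ Q : CQ, (∀ A ∈ Q, S.wfAtom A) → (entailsQ I0 Th Q ↔ entailsQ I0' Th' Q)

/-! ## Semi-width -/

/-- Edge of the basic position graph of a set of TGDs: an edge from position `(R,i)` to
`(U,j)` when some TGD has an exported variable at position `i` of an `R`-atom of its body
and at position `j` of its head atom, on relation `U`. -/
def posEdge (Th : Finset TGD) (p q : ℕ × ℕ) : Prop :=
  ∃ τ ∈ Th, ∃ x ∈ τ.exported, ∃ A ∈ τ.body,
    A.rel = p.1 ∧ A.args[p.2]? = some x ∧ τ.head.rel = q.1 ∧ τ.head.args[q.2]? = some x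

/-- The basic position graph is acyclic. -/
def posAcyclic (Th : Finset TGD) : Prop :=
  ∀ p, ¬ Relation.TransGen (posEdge Th) p p

/-- Semi-width at most `w`: the TGDs decompose into a part of width at most `w` and a part
whose basic position graph is acyclic. -/
def semiWidthLe (Th : Finset TGD) (w : ℕ) : Prop :=
  ∃ T1 T2 : Finset TGD, Th = T1 ∪ T2 ∧ (∀ τ ∈ T1, τ.width ≤ w) ∧ posAcyclic T2

/-! ## Isomorphic copies -/

/-- `B` is an isomorphic copy of the atom `A`. -/
def atomIso (A B : Atom) : Prop :=
  ∃ r : ℕ → ℕ, Set.InjOn r ↑A.vars ∧ B = A.rename r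

def TGD.allVars (τ : TGD) : Finset ℕ := τ.bodyVars ∪ τ.head.vars

def TGD.renameAll (σ : ℕ → ℕ) (τ : TGD) : TGD :=
  ⟨τ.body.map (Atom.rename σ), τ.head.rename σ⟩

/-- `τ` is a variable-renaming (isomorphic copy) of the TGD `γ`. -/
def tgdIso (γ τ : TGD) : Prop :=
  ∃ r : ℕ → ℕ, Set.InjOn r ↑γ.allVars ∧ τ = γ.renameAll r

/-- An isomorphism from a finite instance `S` onto a set of facts `T`. -/
def instIso (S : Finset Fact) (T : Set Fact) : Prop :=
  ∃ h : ℕ → ℕ, Set.InjOn h ↑(adomF S) ∧ T = (Atom.rename h) '' ↑S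

/-! ## Childish instances and saturations -/

/-- A childish instance: one principal fact which is an isomorphic copy of some GTGD head
of `Th`, together with side facts whose active domain is a set of at most `w` elements
of the principal fact. -/
def childish (Th : Finset TGD) (S' : Finset ℕ) (w : ℕ) (I : Finset Fact) : Prop :=
  ∃ F ∈ I, F.rel ∉ S' ∧ (∃ τ ∈ Th, atomIso τ.head F) ∧
    (∀ G ∈ I, G ≠ F → G.rel ∈ S' ∧ G.vars ⊆ F.vars) ∧
    (adomF (I.erase F)).card ≤ w

/-- A childish saturation of `Th`: a finite set of full TGDs, each entailed by `Th`,
which is complete for fact entailment over childish instances. -/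
def childishSaturation (Th : Finset TGD) (S' : Finset ℕ) (w : ℕ) (Th' : Finset TGD) : Prop :=
  (∀ τ ∈ Th', τ.isFull) ∧
  (∀ τ ∈ Th', logEntails Th τ) ∧
  (∀ I : Finset Fact, childish Th S' w I →
    ∀ F : Fact, F.vars ⊆ adomF I → entailsF I Th F → entailsF I Th' F)

/-- A `Th`-fact-saturated instance: closed under entailed facts on the same domain. -/
def factSaturated (Th : Finset TGD) (I : Finset Fact) : Prop :=
  ∀ F : Fact, F.vars ⊆ adomF I → entailsF I Th F → F ∈ I

/-! ## Suitable GTGDs and the suitable saturation -/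

/-- An atom is `Th`-compatible: it is a side atom, or isomorphic to the head atom of
some GTGD of `Th`. -/
def compatible (Th : Finset TGD) (S' : Finset ℕ) (A : Atom) : Prop :=
  A.rel ∈ S' ∨ ∃ τ ∈ Th, atomIso τ.head A

/-- Breadth at most `b`: the non-guard body atoms only use at most `b` variables of the
principal guard. -/
def breadthLe (S' : Finset ℕ) (τ : TGD) (b : ℕ) : Prop :=
  ∃ A, isPrincipalGuard S' τ A ∧ ∃ X : Finset ℕ, X ⊆ A.vars ∧ X.card ≤ b ∧
    ∀ B ∈ τ.body, B ≠ A → B.vars ⊆ X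

/-- A `Th`-suitable GTGD: a well-formed full GTGD obeying the side signature, which is
`Th`-compatible, has exactly one principal guard, breadth at most `w` and width at
most `w`. -/
def suitable (Sg : Sig) (S' : Finset ℕ) (Th : Finset TGD) (w : ℕ) (τ : TGD) : Prop :=
  Sg.wfTGD τ ∧ τ.isFull ∧ τ.obeys S' ∧
  (∃! A : Atom, isPrincipalGuard S' τ A) ∧
  (∀ A, isPrincipalGuard S' τ A → compatible Th S' A) ∧
  compatible Th S' τ.head ∧
  breadthLe S' τ w ∧ τ.width ≤ w

/-- The trivial full GTGDs `Σ_triv`: the body consists of a principal atom `A` which is an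
isomorphic copy of a GTGD head of `Th` and of side atoms on at most `w` variables of `A`,
and the head is `A` itself. -/
def trivTGD (Sg : Sig) (S' : Finset ℕ) (Th : Finset TGD) (w : ℕ) (τ : TGD) : Prop :=
  Sg.wfTGD τ ∧ ∃ A ∈ τ.body, A.rel ∉ S' ∧ (∃ γ ∈ Th, atomIso γ.head A) ∧ τ.head = A ∧
    ∃ X : Finset ℕ, X ⊆ A.vars ∧ X.card ≤ w ∧
      ∀ B ∈ τ.body, B ≠ A → B.rel ∈ S' ∧ B.vars ⊆ X

/-- The `S'`-suitable saturation `Ω(Σ)`: closure of the suitable full GTGDs of `Th` and of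
the trivial suitable full GTGDs under the inference rules (Transitivity) and
(Principal+Transitivity), keeping only suitable conclusions. -/
inductive Sat (Sg : Sig) (S' : Finset ℕ) (Th : Finset TGD) (w : ℕ) : TGD → Prop
  | base {τ : TGD} (hτ : τ ∈ Th) (hs : suitable Sg S' Th w τ) : Sat Sg S' Th w τ
  | triv {τ : TGD} (ht : trivTGD Sg S' Th w τ) (hs : suitable Sg S' Th w τ) : Sat Sg S' Th w τ
  | transTh {β Bs1 Bs2 : List Atom} {δ : TGD} {υ : ℕ → ℕ}
      (hBs1 : ∀ B ∈ Bs1, Sat Sg S' Th w ⟨β, B⟩)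
      (hBs2 : ∀ B ∈ Bs2, trivTGD Sg S' Th w ⟨β, B⟩)
      (hδ : δ ∈ Th)
      (hfull : δ.isFull)
      (hhom : ∀ A ∈ δ.body, A.rename υ ∈ β ∨ A.rename υ ∈ Bs1 ∨ A.rename υ ∈ Bs2)
      (hs : suitable Sg S' Th w ⟨β, δ.head.rename υ⟩) :
      Sat Sg S' Th w ⟨β, δ.head.rename υ⟩
  | transSat {β Bs1 Bs2 : List Atom} {δ : TGD} {υ : ℕ → ℕ}
      (hBs1 : ∀ B ∈ Bs1, Sat Sg S' Th w ⟨β, B⟩)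
      (hBs2 : ∀ B ∈ Bs2, trivTGD Sg S' Th w ⟨β, B⟩)
      (hδ : Sat Sg S' Th w δ)
      (hfull : δ.isFull)
      (hhom : ∀ A ∈ δ.body, A.rename υ ∈ β ∨ A.rename υ ∈ Bs1 ∨ A.rename υ ∈ Bs2)
      (hs : suitable Sg S' Th w ⟨β, δ.head.rename υ⟩) :
      Sat Sg S' Th w ⟨β, δ.head.rename υ⟩
  | princTrans {β Bs1 Bs2 : List Atom} {δcc : TGD} {Acc : Atom} {δ0 δ' : TGD} {v : ℕ → ℕ}
      (hBs1 : ∀ B ∈ Bs1, Sat Sg S' Th w ⟨β, B⟩)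
      (hBs2 : ∀ B ∈ Bs2, trivTGD Sg S' Th w ⟨β, B⟩)
      (hcc : δcc ∈ Th) (hccP : δcc.head.rel ∉ S')
      (hAcc : isPrincipalGuard S' δcc Acc)
      (hδ0 : Sat Sg S' Th w δ0)
      (hiso : tgdIso δ0 δ')
      (hfull : δ'.isFull)
      (hguard : isPrincipalGuard S' δ' δcc.head)
      (hside : ∀ A ∈ δ'.body, A ≠ δcc.head → A.vars ⊆ δcc.exported)
      (hheadv : δ'.head.vars ⊆ δcc.exported)
      (hv1 : Acc.rename v ∈ β ∨ Acc.rename v ∈ Bs1 ∨ Acc.rename v ∈ Bs2)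
      (hv2 : ∀ A ∈ δcc.body, A ≠ Acc →
        (A.rename v ∈ β ∨ A.rename v ∈ Bs1 ∨ A.rename v ∈ Bs2))
      (hv3 : ∀ A ∈ δ'.body, A ≠ δcc.head →
        (A.rename v ∈ β ∨ A.rename v ∈ Bs1 ∨ A.rename v ∈ Bs2))
      (hs : suitable Sg S' Th w ⟨β, δ'.head.rename v⟩) :
      Sat Sg S' Th w ⟨β, δ'.head.rename v⟩


/-! ## Chase trees and the principal-exempt one-pass chase -/

/-- A chase tree: a finite prefix-closed set of node positions (the root is `[]`,
children of `v` are `v ++ [k]`), a labelling of nodes by finite sets of facts,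
and a recently-updated node. -/
structure CTree where
  nodes : Finset (List ℕ)
  lbl : List ℕ → Finset Fact
  recent : List ℕ

/-- All facts of a chase tree (its underlying instance). -/
def CTree.facts (T : CTree) : Finset Fact := T.nodes.biUnion T.lbl

/-- The active domain of a chase tree. -/
def CTree.adom (T : CTree) : Finset ℕ := T.nodes.biUnion fun v => adomF (T.lbl v)

/-- The initial chase tree on instance `I0`: a single root node labelled `I0`. -/
def initTree (I0 : Finset Fact) : CTree :=
  ⟨{[]}, fun v => if v = [] then I0 else ∅, []⟩

/-- A propagation step (of one side fact from the recently updated node to its parent)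
is applicable. -/
def Propagable (S' : Finset ℕ) (T : CTree) : Prop :=
  T.recent ≠ [] ∧ ∃ F ∈ T.lbl T.recent, F.rel ∈ S' ∧
    F ∉ T.lbl T.recent.dropLast ∧ F.vars ⊆ adomF (T.lbl T.recent.dropLast)

/-- One step of the principal-exempt one-pass chase for GTGDs `Th` strongly obeying
side signature `S'`. All steps apply at the recently updated node; chase steps are only
allowed when no propagation step applies; only side facts are inherited by new nodes. -/
inductive PEStep (Th : Finset TGD) (S' : Finset ℕ) : CTree → CTree → Prop
  /-- Propagation step: copy exactly one side fact to the parent (which must guard it and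
  not already contain it); the parent becomes recently updated. -/
  | prop (T : CTree) (F : Fact)
      (hrec : T.recent ∈ T.nodes) (hnr : T.recent ≠ [])
      (hF : F ∈ T.lbl T.recent) (hside : F.rel ∈ S')
      (hnew : F ∉ T.lbl T.recent.dropLast)
      (hgd : F.vars ⊆ adomF (T.lbl T.recent.dropLast)) :
      PEStep Th S' T
        ⟨T.nodes,
         Function.update T.lbl T.recent.dropLast
           (insert F (T.lbl T.recent.dropLast)),
         T.recent.dropLast⟩
  /-- Chase step with a full side GTGD: add the derived fact (which must be new in the
  underlying instance) to the recently updated node. -/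
  | fullSide (T : CTree) (τ : TGD) (σ : ℕ → ℕ)
      (hnp : ¬ Propagable S' T)
      (hτ : τ ∈ Th) (hfull : τ.isFull) (hside : τ.head.rel ∈ S')
      (htrig : ∀ A ∈ τ.body, A.rename σ ∈ T.lbl T.recent)
      (hnew : τ.head.rename σ ∉ T.facts) :
      PEStep Th S' T
        ⟨T.nodes,
         Function.update T.lbl T.recent (insert (τ.head.rename σ) (T.lbl T.recent)),
         T.recent⟩
  /-- Chase step with a non-full GTGD: create a fresh child of the recently updated node,
  containing the instantiated head (with fresh nulls for the existential variables)
  together with inherited side facts of the parent guarded by the new fact. -/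
  | nonfull (T : CTree) (τ : TGD) (σ σ' : ℕ → ℕ) (k : ℕ) (inh : Finset Fact)
      (hnp : ¬ Propagable S' T)
      (hτ : τ ∈ Th) (hnf : ¬ τ.isFull)
      (htrig : ∀ A ∈ τ.body, A.rename σ ∈ T.lbl T.recent)
      (hext : ∀ x ∈ τ.bodyVars, σ' x = σ x)
      (hfresh : ∀ y ∈ τ.existVars, σ' y ∉ T.adom)
      (hinj : Set.InjOn σ' ↑τ.existVars)
      (hnewnode : (T.recent ++ [k]) ∉ T.nodes)
      (hinh : inh ⊆ T.lbl T.recent)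
      (hinhside : ∀ F ∈ inh, F.rel ∈ S' ∧ F.vars ⊆ (τ.head.rename σ').vars) :
      PEStep Th S' T
        ⟨insert (T.recent ++ [k]) T.nodes,
         Function.update T.lbl (T.recent ++ [k]) (insert (τ.head.rename σ') inh),
         T.recent ++ [k]⟩
  /-- Relaxed chase step with a full principal TGD: create a fresh child of the
  recently updated node, containing the instantiated head together with inherited side
  facts of the parent guarded by it (no fresh value is introduced). -/
  | relaxed (T : CTree) (τ : TGD) (σ : ℕ → ℕ) (k : ℕ) (inh : Finset Fact)
      (hnp : ¬ Propagable S' T)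
      (hτ : τ ∈ Th) (hfull : τ.isFull) (hprin : τ.head.rel ∉ S')
      (htrig : ∀ A ∈ τ.body, A.rename σ ∈ T.lbl T.recent)
      (hnewnode : (T.recent ++ [k]) ∉ T.nodes)
      (hinh : inh ⊆ T.lbl T.recent)
      (hinhside : ∀ F ∈ inh, F.rel ∈ S' ∧ F.vars ⊆ (τ.head.rename σ).vars) :
      PEStep Th S' T
        ⟨insert (T.recent ++ [k]) T.nodes,
         Function.update T.lbl (T.recent ++ [k]) (insert (τ.head.rename σ) inh),
         T.recent ++ [k]⟩

/-- A principal-exempt one-pass tree-like chase proof of the fact `F` from `I0` and `Th`: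
a sequence of principal-exempt one-pass chase steps from the initial tree on `I0`,
ending in a tree containing `F` in some node. -/
def PEProof (I0 : Finset Fact) (Th : Finset TGD) (S' : Finset ℕ) (F : Fact) : Prop :=
  ∃ T : CTree, Relation.ReflTransGen (PEStep Th S') (initTree I0) T ∧ F ∈ T.facts

/-! ## The shortcut chase -/

/-- A tree of (possibly infinite) sets of facts, used for the shortcut chase. -/
structure SCTree where
  nodes : Finset (List ℕ)
  lbl : List ℕ → Set Fact

/-- The underlying instance of a shortcut chase tree. -/
def SCTree.facts (T : SCTree) : Set Fact := { F | ∃ v ∈ T.nodes, F ∈ T.lbl v }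

/-- Closure of a set of facts under the full TGDs of a finite set `Th'`. -/
def fullClosure (Th' : Finset TGD) (X : Set Fact) : Set Fact :=
  { F | ∀ J : Set Fact, X ⊆ J → (∀ τ ∈ Th', τ.isFull → τ.holdsIn J) → F ∈ J }

/-- Closure of a set of facts under the full TGDs of a family `R` of TGDs. -/
def fullClosureP (R : TGD → Prop) (X : Set Fact) : Set Fact :=
  { F | ∀ J : Set Fact, X ⊆ J → (∀ τ, R τ → τ.isFull → τ.holdsIn J) → F ∈ J }

/-- The initial shortcut chase tree on instance `I`. -/
def initSC (I : Finset Fact) : SCTree :=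
  ⟨{[]}, fun v => if v = [] then ↑I else ∅⟩

/-- A step of the shortcut chase based on the saturation `Th'`: fire a non-full GTGD of
`Th` at a node, creating a fresh child containing the new fact (with fresh nulls),
all facts of the parent guarded by it, and (full saturation step) all consequences of
the full GTGDs of `Th'`. There are no propagation steps. -/
inductive SCStep (Th Th' : Finset TGD) : SCTree → SCTree → Prop
  | step (T : SCTree) (g : List ℕ) (τ : TGD) (σ σ' : ℕ → ℕ) (k : ℕ)
      (hg : g ∈ T.nodes) (hτ : τ ∈ Th) (hnf : ¬ τ.isFull)
      (htrig : ∀ A ∈ τ.body, A.rename σ ∈ T.lbl g)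
      (hext : ∀ x ∈ τ.bodyVars, σ' x = σ x)
      (hfresh : ∀ y ∈ τ.existVars, ∀ u ∈ T.nodes, ∀ F ∈ T.lbl u, σ' y ∉ F.vars)
      (hinj : Set.InjOn σ' ↑τ.existVars)
      (hnew : (g ++ [k]) ∉ T.nodes) :
      SCStep Th Th' T
        ⟨insert (g ++ [k]) T.nodes,
         Function.update T.lbl (g ++ [k])
           (fullClosure Th'
             (insert (τ.head.rename σ')
               { F | F ∈ T.lbl g ∧ F.vars ⊆ (τ.head.rename σ').vars }))⟩

/-! ## The tree-like chase for linear TGDs, tight matches -/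

/-- A tree-like chase for linear TGDs: the root `[]` implicitly holds the initial
instance; each non-root node holds exactly one fact `fct v` and records the rule
`rule v` used to create it. -/
structure LinChase where
  nodes : Finset (List ℕ)
  fct : List ℕ → Fact
  rule : List ℕ → TGD

/-- Validity of a linear chase tree for initial instance `I0` and linear TGDs `Th`:
each non-root node is created by firing its rule on the fact of its parent (or a fact of
`I0` for children of the root), with fresh distinct nulls for existential variables. -/
def LinChase.valid (C : LinChase) (I0 : Finset Fact) (Th : Finset TGD) : Prop :=
  [] ∈ C.nodes ∧ (∀ v ∈ C.nodes, ∀ u : List ℕ, u <+: v → u ∈ C.nodes) ∧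
  ∀ v ∈ C.nodes, v ≠ [] →
    C.rule v ∈ Th ∧
    ∃ B : Atom, ∃ σ : ℕ → ℕ, (C.rule v).body = [B] ∧
      (v.dropLast = [] → B.rename σ ∈ I0) ∧
      (v.dropLast ≠ [] → B.rename σ = C.fct v.dropLast) ∧
      C.fct v = (C.rule v).head.rename σ ∧
      Set.InjOn σ ↑(C.rule v).existVars ∧
      ∀ y ∈ (C.rule v).existVars,
        σ y ∉ adomF I0 ∧ ∀ u ∈ C.nodes, ¬ v <+: u → σ y ∉ (C.fct u).vars

/-- All facts of a linear chase tree, including the initial instance. -/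
def LinChase.allFacts (C : LinChase) (I0 : Finset Fact) : Set Fact :=
  ↑I0 ∪ { F | ∃ v ∈ C.nodes, v ≠ [] ∧ F = C.fct v }

/-- A match of the CQ `Q` in the linear chase tree. -/
def LinChase.isMatch (C : LinChase) (I0 : Finset Fact) (σ : ℕ → ℕ) (Q : CQ) : Prop :=
  ∀ A ∈ Q, A.rename σ ∈ C.allFacts I0

/-- Longest common prefix of two lists: the least common ancestor of two tree nodes. -/
def lcp : List ℕ → List ℕ → List ℕ
  | a :: as, b :: bs => if a = b then a :: lcp as bs else []
  | _, _ => []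

/-- The nodes of the chase tree containing an image fact of the match. -/
def imageNodes (C : LinChase) (σ : ℕ → ℕ) (Q : CQ) : Set (List ℕ) :=
  { v | v ∈ C.nodes ∧ v ≠ [] ∧ ∃ A ∈ Q, A.rename σ = C.fct v }

/-- The augmented image of a match: the closure of its image under least common
ancestors, together with the root. -/
def augImage (C : LinChase) (σ : ℕ → ℕ) (Q : CQ) : Set (List ℕ) :=
  {[]} ∪ imageNodes C σ Q ∪
    { u | ∃ v ∈ imageNodes C σ Q, ∃ w ∈ imageNodes C σ Q, u = lcp v w }

/-- `n` is the image parent of `n'`: the lowest strict ancestor of `n'` within the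
augmented image. -/
def imageParent (S : Set (List ℕ)) (n n' : List ℕ) : Prop :=
  n ∈ S ∧ n' ∈ S ∧ n <+: n' ∧ n ≠ n' ∧
    ∀ m ∈ S, n <+: m → m <+: n' → (m = n ∨ m = n')

/-- Nodes `n` (an ancestor) and `n'` are far apart: between them lie two distinct
generated facts produced by the same rule, with the same equality pattern between
positions, and sharing values only at identical positions. -/
def farApart (C : LinChase) (n n' : List ℕ) : Prop :=
  ∃ n1 ∈ C.nodes, ∃ n2 ∈ C.nodes, n1 ≠ [] ∧ n2 ≠ [] ∧ n1 ≠ n2 ∧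
    n <+: n1 ∧ n1 <+: n2 ∧ n2 <+: n' ∧
    C.fct n1 ≠ C.fct n2 ∧ C.rule n1 = C.rule n2 ∧
    (∀ i j : ℕ, ((C.fct n1).args[i]? = (C.fct n1).args[j]? ↔
      (C.fct n2).args[i]? = (C.fct n2).args[j]?)) ∧
    (∀ a : ℕ, a ∈ (C.fct n1).args → a ∈ (C.fct n2).args →
      ∀ i : ℕ, ((C.fct n1).args[i]? = some a ↔ (C.fct n2).args[i]? = some a))

/-- A tight match: every node of the augmented image is near its image parent. -/
def tightMatch (C : LinChase) (σ : ℕ → ℕ) (Q : CQ) : Prop :=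
  ∀ n n', imageParent (augImage C σ Q) n n' → ¬ farApart C n n'


/-! ## Linearization -/

/-- Canonical childish instances: well-formed childish instances whose active domain is
contained in `{0, …, arity(Sg) - 1}` (one representative per isomorphism type). -/
def canonChildish (Sg : Sig) (S' : Finset ℕ) (Th : Finset TGD) (w : ℕ) :
    Set (Finset Fact) :=
  { S | childish Th S' w S ∧ (∀ F ∈ S, Sg.wfAtom F) ∧ adomF S ⊆ Finset.range Sg.arity }

/-- The marked elements of a childish instance with principal fact `P`: the active domain
of its side part. -/
def markedElems (S : Finset Fact) (P : Fact) : Finset ℕ := adomF (S.erase P)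

/-- A homomorphism from the marked elements of `S` (with principal fact `P`) to
themselves, extended as the identity elsewhere. -/
def markedHom (S : Finset Fact) (P : Fact) (h : ℕ → ℕ) : Prop :=
  (∀ x ∈ markedElems S P, h x ∈ markedElems S P) ∧ ∀ x, x ∉ markedElems S P → h x = x

/-- The closure `S*` of `h(S)` under the full TGDs of the `S'`-suitable saturation of
`Th`. -/
def satClosure (Sg : Sig) (S' : Finset ℕ) (Th : Finset TGD) (w : ℕ)
    (S : Finset Fact) (h : ℕ → ℕ) : Set Fact :=
  fullClosureP (Sat Sg S' Th w) ((Atom.rename h) '' ↑S)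

/-- The (Instantiate) rules of `Linearize(Σ)`: for every canonical childish instance `S`
with principal fact `P`, marked homomorphism `h`, and fact `F` of the closure `S*` of
`h(S)`, the full linear TGD `R_S(h(x⃗)) → F`. The fresh relation `R_S` is named by the
injection `ρ`. -/
def instantiateRules (Sg : Sig) (S' : Finset ℕ) (Th : Finset TGD) (w : ℕ)
    (ρ : Finset Fact → ℕ) : Set TGD :=
  { τ | ∃ S ∈ canonChildish Sg S' Th w, ∃ P ∈ S, P.rel ∉ S' ∧
        ∃ h : ℕ → ℕ, markedHom S P h ∧
        ∃ F ∈ satClosure Sg S' Th w S h,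
          τ = ⟨[⟨ρ S, P.args.map h⟩], F⟩ }

/-- The (Lift) rules of `Linearize(Σ)`: for every canonical childish instance `S` with
principal fact `P`, marked homomorphism `h` with closure `S*`, non-full GTGD `δ` of `Th`
and match `h'` of the body of `δ` in `S*`, extended with fresh distinct values `σ` for
the existential variables of `δ`, the linear TGD `R_S(h(x⃗)) → ∃ w⃗ R_{S''}(h'(z⃗), w⃗)`
where `S''` is the canonical childish instance isomorphic (via `g`) to the instance made
of the instantiated head of `δ` together with the facts of `S*` using only elements of
`h'(z⃗)` for `z⃗` the exported variables of `δ`. -/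
def liftRules (Sg : Sig) (S' : Finset ℕ) (Th : Finset TGD) (w : ℕ)
    (ρ : Finset Fact → ℕ) : Set TGD :=
  { τ | ∃ S ∈ canonChildish Sg S' Th w, ∃ P ∈ S, P.rel ∉ S' ∧
        ∃ h : ℕ → ℕ, markedHom S P h ∧
        ∃ δ ∈ Th, ¬ δ.isFull ∧
        ∃ h' σ : ℕ → ℕ,
          (∀ A ∈ δ.body, A.rename h' ∈ satClosure Sg S' Th w S h) ∧
          (∀ x ∈ δ.bodyVars, σ x = h' x) ∧
          Set.InjOn σ ↑δ.existVars ∧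
          (∀ y ∈ δ.existVars, ∀ G ∈ satClosure Sg S' Th w S h, σ y ∉ G.vars) ∧
        ∃ S'' ∈ canonChildish Sg S' Th w, ∃ P'' ∈ S'', P''.rel ∉ S' ∧
        ∃ g : ℕ → ℕ, Set.InjOn g ↑(adomF S'') ∧
          P''.rename g = δ.head.rename σ ∧
          (Atom.rename g) '' ↑S'' =
            insert (δ.head.rename σ)
              { G | G ∈ satClosure Sg S' Th w S h ∧
                    G.vars ⊆ Finset.image h' δ.exported } ∧
          τ = ⟨[⟨ρ S, P.args.map h⟩], ⟨ρ S'', P''.args.map g⟩⟩ }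

/-- `Linearize(Σ)`: the linear TGDs produced by the rules (Instantiate) and (Lift). -/
def linearize (Sg : Sig) (S' : Finset ℕ) (Th : Finset TGD) (w : ℕ)
    (ρ : Finset Fact → ℕ) : Set TGD :=
  instantiateRules Sg S' Th w ρ ∪ liftRules Sg S' Th w ρ

/-- The instance `I^Lin`: `I` together with, for every principal fact `F` of `I` and
every set of at most `w` elements of `F`, the fact `R_S(a⃗)` for `S` the canonical
representative of the childish instance made of `F` and the side facts of `I` on the
chosen elements. -/
def ILin (Sg : Sig) (S' : Finset ℕ) (Th : Finset TGD) (w : ℕ)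
    (ρ : Finset Fact → ℕ) (I : Finset Fact) : Set Fact :=
  ↑I ∪ { G | ∃ F ∈ I, F.rel ∉ S' ∧ ∃ Ps : Finset ℕ, Ps ⊆ F.vars ∧ Ps.card ≤ w ∧
        ∃ S0 ∈ canonChildish Sg S' Th w, ∃ P0 ∈ S0, P0.rel ∉ S' ∧
        ∃ g : ℕ → ℕ, Set.InjOn g ↑(adomF S0) ∧ P0.rename g = F ∧
          (Atom.rename g) '' ↑S0 =
            insert F { H | H ∈ I ∧ H.rel ∈ S' ∧ H.vars ⊆ Ps } ∧
        G = ⟨ρ S0, P0.args.map g⟩ }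


/-! ## Multi-headed TGDs and TGDs with constants -/

/-- An atom possibly containing constants: arguments are either variables (`.inl`) or
constants (`.inr`). -/
structure CAtom where
  rel : ℕ
  args : List (ℕ ⊕ ℕ)
deriving DecidableEq

/-- The variables of an atom with constants. -/
def CAtom.vars (A : CAtom) : Finset ℕ := (A.args.filterMap Sum.getLeft?).toFinset

/-- Whether an atom with constants is actually constant-free. -/
def CAtom.constantFree (A : CAtom) : Prop := ∀ t ∈ A.args, t.isLeft

/-- Instantiate an atom with constants by a variable assignment (constants denote
themselves). -/
def CAtom.inst (σ : ℕ → ℕ) (A : CAtom) : Fact := ⟨A.rel, A.args.map (Sum.elim σ id)⟩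

def Sig.wfCAtom (S : Sig) (A : CAtom) : Prop := A.rel ∈ S.rels ∧ A.args.length = S.ar A.rel

/-- A multi-headed TGD with constants: body and head are conjunctions of atoms which may
contain constants. -/
structure MTGD where
  body : List CAtom
  head : List CAtom
deriving DecidableEq

def MTGD.bodyVars (τ : MTGD) : Finset ℕ := τ.body.foldr (fun A s => A.vars ∪ s) ∅

/-- A multi-headed TGD is guarded when some body atom contains all body variables. -/
def MTGD.guarded (τ : MTGD) : Prop := ∃ A ∈ τ.body, τ.bodyVars ⊆ A.vars

/-- A multi-headed GTGD obeys side signature `S'`. -/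
def MTGD.obeys (τ : MTGD) (S' : Finset ℕ) : Prop :=
  ∃ A, (A ∈ τ.body ∧ τ.bodyVars ⊆ A.vars) ∧ ∀ B ∈ τ.body, B = A ∨ B.rel ∈ S'

def MTGD.holdsIn (τ : MTGD) (I : Set Fact) : Prop :=
  ∀ σ : ℕ → ℕ, (∀ A ∈ τ.body, A.inst σ ∈ I) →
    ∃ σ' : ℕ → ℕ, (∀ v ∈ τ.bodyVars, σ' v = σ v) ∧ ∀ A ∈ τ.head, A.inst σ' ∈ I

def Sig.wfMTGD (S : Sig) (τ : MTGD) : Prop :=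
  (∀ A ∈ τ.body, S.wfCAtom A) ∧ (∀ A ∈ τ.head, S.wfCAtom A)

/-- A single-headed TGD with constants. -/
structure CTGD where
  body : List CAtom
  head : CAtom
deriving DecidableEq

def CTGD.bodyVars (τ : CTGD) : Finset ℕ := τ.body.foldr (fun A s => A.vars ∪ s) ∅

def CTGD.guarded (τ : CTGD) : Prop := ∃ A ∈ τ.body, τ.bodyVars ⊆ A.vars

def CTGD.obeys (τ : CTGD) (S' : Finset ℕ) : Prop :=
  ∃ A, (A ∈ τ.body ∧ τ.bodyVars ⊆ A.vars) ∧ ∀ B ∈ τ.body, B = A ∨ B.rel ∈ S'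

def CTGD.holdsIn (τ : CTGD) (I : Set Fact) : Prop :=
  ∀ σ : ℕ → ℕ, (∀ A ∈ τ.body, A.inst σ ∈ I) →
    ∃ σ' : ℕ → ℕ, (∀ v ∈ τ.bodyVars, σ' v = σ v) ∧ τ.head.inst σ' ∈ I

def Sig.wfCTGD (S : Sig) (τ : CTGD) : Prop :=
  (∀ A ∈ τ.body, S.wfCAtom A) ∧ S.wfCAtom τ.head

/-- A conjunctive query possibly containing constants. -/
abbrev CCQ := List CAtom

def CCQholds (Q : CCQ) (I : Set Fact) : Prop := ∃ σ : ℕ → ℕ, ∀ A ∈ Q, A.inst σ ∈ I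

/-- OWQA entailment for multi-headed TGDs with constants. -/
def entailsQM (I0 : Finset Fact) (Th : Finset MTGD) (Q : CCQ) : Prop :=
  ∀ J : Set Fact, ↑I0 ⊆ J → (∀ τ ∈ Th, τ.holdsIn J) → CCQholds Q J

/-- OWQA entailment for single-headed TGDs with constants. -/
def entailsQC (I0 : Finset Fact) (Th : Finset CTGD) (Q : CCQ) : Prop :=
  ∀ J : Set Fact, ↑I0 ⊆ J → (∀ τ ∈ Th, τ.holdsIn J) → CCQholds Q J

/-- A constant-free atom viewed as an atom with constants. -/
def Atom.toCAtom (A : Atom) : CAtom := ⟨A.rel, A.args.map Sum.inl⟩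


/-! ## Encodings and machine-based complexity -/

/-- The identity finite encoding of bit strings. -/
def boolListEnc : Computability.Encoding (List Bool) Bool where
  encode := id
  decode := fun l => some l
  decode_encode := fun _ => rfl

/-- Self-delimiting encoding of a natural number as a bit string. -/
def encNat (n : ℕ) : List Bool := List.replicate n true ++ [false]

/-- Encoding of a list as a bit string, given an encoding of its elements. -/
def encListBy {α : Type} (f : α → List Bool) (l : List α) : List Bool :=
  encNat l.length ++ l.foldr (fun a r => f a ++ r) []

def encAtom (A : Atom) : List Bool := encNat A.rel ++ encListBy encNat A.args

def encFact : Fact → List Bool := encAtom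

def encTGD (τ : TGD) : List Bool := encListBy encAtom τ.body ++ encAtom τ.head

def encCQ (Q : CQ) : List Bool := encListBy encAtom Q

def encSum (t : ℕ ⊕ ℕ) : List Bool :=
  match t with
  | .inl v => true :: encNat v
  | .inr c => false :: encNat c

def encCAtom (A : CAtom) : List Bool := encNat A.rel ++ encListBy encSum A.args

def encMTGD (τ : MTGD) : List Bool := encListBy encCAtom τ.body ++ encListBy encCAtom τ.head

def encCTGD (τ : CTGD) : List Bool := encListBy encCAtom τ.body ++ encCAtom τ.head

/-- Encoding of a signature given as a list of (relation, arity) pairs. -/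
def encSigL (l : List (ℕ × ℕ)) : List Bool :=
  encListBy (fun p => encNat p.1 ++ encNat p.2) l

/-- Encoding of an OWQA input: an instance, a set of TGDs, and a CQ. -/
def encOWQA (I0 : List Fact) (Th : List TGD) (Q : CQ) : List Bool :=
  encListBy encFact I0 ++ encListBy encTGD Th ++ encCQ Q

/-- Pairing of an input string with a certificate string. -/
def pairCode (u v : List Bool) : List Bool := encNat u.length ++ u ++ v

/-- The signature described by a list of (relation, arity) pairs. -/
def sigOf (l : List (ℕ × ℕ)) : Sig :=
  ⟨(l.map Prod.fst).toFinset, fun r => ((l.lookup r).getD 0)⟩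

/-- `f` is computed by a deterministic Turing machine within time `T` (as a function of
the input length). -/
def ComputedInTime (f : List Bool → Bool) (T : ℕ → ℕ) : Prop :=
  ∃ c : Turing.TM2ComputableInTime boolListEnc.encode Computability.encodingBoolBool.encode f,
    ∀ n, c.time n ≤ T n

/-- The machine `M` (with bit-string input and output alphabets), started on input `x`,
halts with output `y` within `m` steps. -/
def OutputsInSteps (M : Turing.TM2ComputableAux Bool Bool) (x y : List Bool) (m : ℕ) :
    Prop :=
  Nonempty (Turing.TM2OutputsInTime M.tm (x.map M.inputAlphabet.invFun)
    (some (y.map M.outputAlphabet.invFun)) m)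

/-!
Soundness: every shortcut chase step is the image of chase steps of `Σ` (the TGDs of `Σ'` are
entailed by `Σ`), so every tree reachable from `I` maps homomorphically into every model of
`I` and `Σ`.

Completeness: run the shortcut chase fairly, so that every trigger of a non-full GTGD at every
node is eventually fired. Every node stays `Σ`-fact-saturated. A fact over a new child that
avoids the fresh nulls is entailed by the saturated parent, into whose models the child maps.
A fact mentioning a fresh null is entailed by the childish instance formed by the new fact and
the inherited side facts: the chases of this instance and of the inherited facts, with disjoint
nulls, glue along their common part into a model of `Σ`, because every trigger has a guard and
all its other atoms are side atoms over the guard. So that fact is produced by `Σ'`. As the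
elements created at a node only occur below it, saturated nodes share all facts over common
elements; hence every trigger of the limit lies in one node, where full GTGDs are handled by
saturation and non-full ones by fairness. The limit is therefore a model of `Σ`, and a match of
`Q` in it already lies in a finite stage.
-/

open Classical

lemma exists_extend_of_injOn {α β γ : Type*} [Nonempty α] {s : Set α} {f : α → β}
    (hf : Set.InjOn f s) (g : α → γ) (φ : β → γ) :
    ∃ r : β → γ, (∀ y ∈ s, r (f y) = g y) ∧ ∀ a ∉ f '' s, r a = φ a := by
  refine ⟨fun a => if a ∈ f '' s then g (Function.invFunOn f s a) else φ a, fun y hy => ?_,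
    fun a ha => if_neg ha⟩
  have hex : ∃ y' ∈ s, f y' = f y := ⟨y, hy, rfl⟩
  simp only [Set.mem_image_of_mem f hy, if_true]
  rw [hf (Function.invFunOn_mem hex) hy (Function.invFunOn_eq hex)]

lemma exists_forall_mem_of_monotone {α β : Type*} {s : ℕ → Set α} (hs : Monotone s)
    (f : β → α) {l : List β} (h : ∀ x ∈ l, ∃ n, f x ∈ s n) : ∃ N, ∀ x ∈ l, f x ∈ s N := by
  have h' : ∀ x, ∃ n, x ∈ l → f x ∈ s n := fun x =>
    if hx : x ∈ l then (h x hx).imp fun _ hn _ => hn else ⟨0, fun h => absurd h hx⟩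
  choose n hn using h'
  exact ⟨l.toFinset.sup n, fun x hx => hs (Finset.le_sup (List.mem_toFinset.2 hx)) (hn x hx)⟩

lemma Atom.rename_rename (f g : ℕ → ℕ) (A : Atom) :
    (A.rename f).rename g = A.rename (g ∘ f) := by
  simp [Atom.rename, List.map_map]

lemma Atom.rename_id (A : Atom) : A.rename id = A := by
  simp [Atom.rename]

lemma Atom.vars_rename (f : ℕ → ℕ) (A : Atom) : (A.rename f).vars = A.vars.image f := by
  ext b
  simp [Atom.rename, Atom.vars]

lemma Atom.mem_vars_rename {f : ℕ → ℕ} {A : Atom} {x : ℕ} (hx : x ∈ A.vars) :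
    f x ∈ (A.rename f).vars := by
  rw [Atom.vars_rename]
  exact Finset.mem_image_of_mem f hx

lemma Atom.rename_congr {f g : ℕ → ℕ} {A : Atom} (h : ∀ a ∈ A.vars, f a = g a) :
    A.rename f = A.rename g := by
  simp only [Atom.rename, Atom.mk.injEq, true_and]
  exact List.map_congr_left fun a ha => h a (List.mem_toFinset.2 ha)

lemma Atom.rename_eq_self {f : ℕ → ℕ} {A : Atom} (h : ∀ a ∈ A.vars, f a = a) :
    A.rename f = A := by
  rw [Atom.rename_congr (g := id) h, Atom.rename_id]

lemma Atom.finite_setOf {R D : Set ℕ} (hR : R.Finite) (hD : D.Finite) (N : ℕ) :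
    {F : Atom | F.rel ∈ R ∧ F.args.length ≤ N ∧ ↑F.vars ⊆ D}.Finite := by
  have := hD.to_subtype
  have hargs : {l : List ℕ | l.length ≤ N ∧ ∀ a ∈ l, a ∈ D}.Finite := by
    refine ((List.finite_length_le D N).image (List.map Subtype.val)).subset ?_
    rintro l ⟨hl, hmem⟩
    lift l to List D using hmem
    exact ⟨l, by simpa using hl, rfl⟩
  refine ((hR.prod hargs).image fun p => (⟨p.1, p.2⟩ : Atom)).subset ?_
  rintro ⟨r, args⟩ ⟨hr, hl, hD⟩
  exact ⟨(r, args), ⟨hr, hl, fun a ha => hD (by simpa [Atom.vars] using ha)⟩, rfl⟩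

lemma TGD.mem_bodyVars {τ : TGD} {x : ℕ} : x ∈ τ.bodyVars ↔ ∃ A ∈ τ.body, x ∈ A.vars := by
  unfold TGD.bodyVars
  induction τ.body with
  | nil => simp
  | cons B t ih => simp [ih]

lemma TGD.not_mem_bodyVars {τ : TGD} {y : ℕ} (h : y ∈ τ.existVars) : y ∉ τ.bodyVars :=
  (Finset.mem_sdiff.1 h).2

lemma TGD.mem_head_vars {τ : TGD} {y : ℕ} (h : y ∈ τ.existVars) : y ∈ τ.head.vars :=
  (Finset.mem_sdiff.1 h).1

lemma TGD.mem_existVars_or_bodyVars {τ : TGD} {x : ℕ} (h : x ∈ τ.head.vars) :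
    x ∈ τ.existVars ∨ x ∈ τ.bodyVars := by
  by_cases hb : x ∈ τ.bodyVars
  · exact Or.inr hb
  · exact Or.inl (Finset.mem_sdiff.2 ⟨h, hb⟩)

lemma TGD.mem_existVars_of_not_mem_exported {τ : TGD} {x : ℕ} (hx : x ∈ τ.head.vars)
    (hne : x ∉ τ.exported) : x ∈ τ.existVars :=
  Finset.mem_sdiff.2 ⟨hx, fun hb => hne (Finset.mem_inter.2 ⟨hx, hb⟩)⟩

lemma TGD.head_mem_of_isFull {τ : TGD} {J : Set Fact} (hJ : τ.holdsIn J) (hfull : τ.isFull)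
    {σ : ℕ → ℕ} (htrig : ∀ A ∈ τ.body, A.rename σ ∈ J) : τ.head.rename σ ∈ J := by
  obtain ⟨σ', hagree, hmem⟩ := hJ σ htrig
  rwa [Atom.rename_congr fun x hx => hagree x (hfull hx)] at hmem

def adomS (X : Set Fact) : Set ℕ := {a | ∃ F ∈ X, a ∈ F.vars}

lemma mem_adomS_of_mem {X : Set Fact} {F : Fact} (hF : F ∈ X) {a : ℕ} (ha : a ∈ F.vars) :
    a ∈ adomS X := ⟨F, hF, ha⟩

lemma adomS_mono {X Y : Set Fact} (h : X ⊆ Y) : adomS X ⊆ adomS Y :=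
  fun _ ⟨F, hF, ha⟩ => ⟨F, h hF, ha⟩

lemma adomS_coe (S : Finset Fact) : adomS ↑S = ↑(adomF S) := by
  ext a
  simp [adomS, adomF]

lemma finite_adomS {X : Set Fact} (h : X.Finite) : (adomS X).Finite := by
  refine (h.biUnion fun F _ => F.vars.finite_toSet).subset ?_
  rintro a ⟨F, hF, ha⟩
  exact Set.mem_biUnion hF ha

lemma TGD.rename_mem_adomS {τ : TGD} {σ : ℕ → ℕ} {P : Set Fact}
    (htrig : ∀ A ∈ τ.body, A.rename σ ∈ P) {x : ℕ} (hx : x ∈ τ.bodyVars) : σ x ∈ adomS P := by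
  obtain ⟨A, hA, hxA⟩ := TGD.mem_bodyVars.1 hx
  exact mem_adomS_of_mem (htrig A hA) (Atom.mem_vars_rename hxA)

def entailsS (Th : Finset TGD) (X : Set Fact) (F : Fact) : Prop :=
  ∀ J : Set Fact, X ⊆ J → (∀ τ ∈ Th, τ.holdsIn J) → F ∈ J

lemma entailsS_mono {Th : Finset TGD} {X Y : Set Fact} {F : Fact} (hXY : X ⊆ Y)
    (h : entailsS Th X F) : entailsS Th Y F :=
  fun J hJ hTh => h J (hXY.trans hJ) hTh

lemma entailsS_head_of_isFull {Th : Finset TGD} {X : Set Fact} {τ : TGD} (hτ : τ ∈ Th)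
    (hfull : τ.isFull) {σ : ℕ → ℕ} (htrig : ∀ A ∈ τ.body, A.rename σ ∈ X) :
    entailsS Th X (τ.head.rename σ) :=
  fun _ hXJ hTh => TGD.head_mem_of_isFull (hTh τ hτ) hfull fun A hA => hXJ (htrig A hA)

section FullClosure

variable {Th Th' : Finset TGD} {X : Set Fact}

lemma subset_fullClosure (Th' : Finset TGD) (X : Set Fact) : X ⊆ fullClosure Th' X :=
  fun _ hF _ hXJ _ => hXJ hF

lemma fullClosure_subset {J : Set Fact} (hXJ : X ⊆ J)
    (hJ : ∀ τ ∈ Th', τ.isFull → τ.holdsIn J) : fullClosure Th' X ⊆ J :=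
  fun _ hF => hF J hXJ hJ

lemma fullClosure_subset_of_logEntails (hent : ∀ τ ∈ Th', logEntails Th τ) {J : Set Fact}
    (hXJ : X ⊆ J) (hJ : ∀ τ ∈ Th, τ.holdsIn J) : fullClosure Th' X ⊆ J :=
  fullClosure_subset hXJ fun τ hτ _ => hent τ hτ J hJ

lemma entailsS_of_mem_fullClosure (hent : ∀ τ ∈ Th', logEntails Th τ) {F : Fact}
    (hF : F ∈ fullClosure Th' X) : entailsS Th X F :=
  fun _ hXJ hJ => fullClosure_subset_of_logEntails hent hXJ hJ hF

lemma entailsS_of_entailsS_fullClosure (hent : ∀ τ ∈ Th', logEntails Th τ) {F : Fact}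
    (h : entailsS Th (fullClosure Th' X) F) : entailsS Th X F :=
  fun J hXJ hJ => h J (fullClosure_subset_of_logEntails hent hXJ hJ) hJ

lemma fullClosure_subset_union (Th' : Finset TGD) (X : Set Fact) :
    fullClosure Th' X ⊆ X ∪ {F : Fact | F.rel ∈ Th'.image (·.head.rel) ∧
      F.args.length ≤ Th'.sup (·.head.args.length) ∧ ↑F.vars ⊆ adomS X} := by
  refine fullClosure_subset Set.subset_union_left fun τ hτ hfull σ htrig => ⟨σ, fun _ _ => rfl,
    Or.inr ⟨Finset.mem_image_of_mem _ hτ, ?_, ?_⟩⟩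
  · simpa [Atom.rename] using Finset.le_sup (f := (·.head.args.length)) hτ
  · intro a ha
    rw [Finset.mem_coe, Atom.vars_rename] at ha
    obtain ⟨x, hx, rfl⟩ := Finset.mem_image.1 ha
    obtain ⟨A, hA, hxA⟩ := TGD.mem_bodyVars.1 (hfull hx)
    rcases htrig A hA with hAX | hA'
    · exact mem_adomS_of_mem hAX (Atom.mem_vars_rename hxA)
    · exact hA'.2.2 (Atom.mem_vars_rename hxA)

lemma adomS_fullClosure (Th' : Finset TGD) (X : Set Fact) :
    adomS (fullClosure Th' X) ⊆ adomS X := by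
  rintro a ⟨F, hF, ha⟩
  rcases fullClosure_subset_union Th' X hF with h | h
  · exact mem_adomS_of_mem h ha
  · exact h.2.2 ha

lemma finite_fullClosure (Th' : Finset TGD) (hX : X.Finite) :
    (fullClosure Th' X).Finite :=
  (hX.union (Atom.finite_setOf (Finset.finite_toSet _) (finite_adomS hX) _)).subset
    (fullClosure_subset_union Th' X)

end FullClosure

instance : Encodable Atom :=
  Encodable.ofEquiv (ℕ × List ℕ) ⟨fun A => (A.rel, A.args), fun p => ⟨p.1, p.2⟩,
    fun _ => rfl, fun _ => rfl⟩

instance : Encodable TGD :=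
  Encodable.ofEquiv (List Atom × Atom) ⟨fun τ => (τ.body, τ.head), fun p => ⟨p.1, p.2⟩,
    fun _ => rfl, fun _ => rfl⟩

namespace TGD

def sortedBodyVars (τ : TGD) : List ℕ := τ.bodyVars.sort (· ≤ ·)

/-- Lists encode assignments of the body variables (in increasing order), so that triggers can
be enumerated. -/
def assignOfList (τ : TGD) (l : List ℕ) : ℕ → ℕ := fun v => l.getD (τ.sortedBodyVars.idxOf v) 0

def listOfAssign (τ : TGD) (σ : ℕ → ℕ) : List ℕ := τ.sortedBodyVars.map σ

lemma assignOfList_listOfAssign {τ : TGD} {σ : ℕ → ℕ} {v : ℕ} (hv : v ∈ τ.bodyVars) :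
    τ.assignOfList (τ.listOfAssign σ) v = σ v := by
  have hlt : τ.sortedBodyVars.idxOf v < τ.sortedBodyVars.length :=
    List.idxOf_lt_length_iff.2 ((Finset.mem_sort _).2 hv)
  rw [assignOfList, List.getD_eq_getElem _ _ (by simpa [listOfAssign] using hlt)]
  simp [listOfAssign]

lemma rename_assignOfList_listOfAssign {τ : TGD} {σ : ℕ → ℕ} {A : Atom} (hA : A ∈ τ.body) :
    A.rename (τ.assignOfList (τ.listOfAssign σ)) = A.rename σ :=
  Atom.rename_congr fun _ ha => assignOfList_listOfAssign (mem_bodyVars.2 ⟨A, hA, ha⟩)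

lemma assignOfList_le_sum (τ : TGD) (l : List ℕ) (v : ℕ) : τ.assignOfList l v ≤ l.sum := by
  unfold assignOfList
  by_cases h : τ.sortedBodyVars.idxOf v < l.length
  · rw [List.getD_eq_getElem _ _ h]
    exact List.le_sum_of_mem (List.getElem_mem _)
  · rw [List.getD_eq_default _ _ (not_lt.1 h)]
    exact Nat.zero_le _

end TGD

/-- The null created for the existential variable `y` when `τ` fires on the body assignment
`l`. Nulls exceed `B` and the values of `l`, have parity `ε`, and determine `(τ, l, y)`. -/
def nullCode (ε : Bool) (B : ℕ) (t : TGD × List ℕ × ℕ) : ℕ :=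
  2 * (B + Nat.pair (Encodable.encode t) t.2.1.sum + 1) + ε.toNat

lemma lt_nullCode (ε : Bool) (B : ℕ) (t : TGD × List ℕ × ℕ) : B < nullCode ε B t := by
  unfold nullCode; omega

lemma assignOfList_lt_nullCode (ε : Bool) (B : ℕ) (τ : TGD) (l : List ℕ) (v y : ℕ) :
    τ.assignOfList l v < nullCode ε B (τ, l, y) := by
  have h1 := τ.assignOfList_le_sum l v
  have h2 := Nat.right_le_pair (Encodable.encode (τ, l, y)) l.sum
  simp only [nullCode]; omega

lemma nullCode_mod_two (ε : Bool) (B : ℕ) (t : TGD × List ℕ × ℕ) :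
    nullCode ε B t % 2 = ε.toNat := by
  unfold nullCode; cases ε <;> simp

lemma nullCode_injective (ε : Bool) (B : ℕ) : Function.Injective (nullCode ε B) := by
  intro t t' h
  unfold nullCode at h
  have hp : Nat.pair (Encodable.encode t) t.2.1.sum =
      Nat.pair (Encodable.encode t') t'.2.1.sum := by
    omega
  exact Encodable.encode_injective (Nat.pair_eq_pair.1 hp).1

def chaseWit (ε : Bool) (B : ℕ) (τ : TGD) (l : List ℕ) : ℕ → ℕ :=
  fun v => if v ∈ τ.existVars then nullCode ε B (τ, l, v) else τ.assignOfList l v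

lemma chaseWit_of_mem_bodyVars {ε : Bool} {B : ℕ} {τ : TGD} {l : List ℕ} {v : ℕ}
    (hv : v ∈ τ.bodyVars) : chaseWit ε B τ l v = τ.assignOfList l v :=
  if_neg fun h => TGD.not_mem_bodyVars h hv

/-- The oblivious chase of `X` by `Th`, naming every null by the trigger that creates it,
so that it is a least fixed point and maps into every model by recursion on null names. -/
inductive Chase (Th : Finset TGD) (ε : Bool) (B : ℕ) (X : Set Fact) : Fact → Prop
  | base {F : Fact} : F ∈ X → Chase Th ε B X F
  | full {τ : TGD} {σ : ℕ → ℕ} : τ ∈ Th → τ.isFull →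
      (∀ A ∈ τ.body, Chase Th ε B X (A.rename σ)) → Chase Th ε B X (τ.head.rename σ)
  | nonfull {τ : TGD} (l : List ℕ) : τ ∈ Th → ¬τ.isFull →
      (∀ A ∈ τ.body, Chase Th ε B X (A.rename (τ.assignOfList l))) →
      Chase Th ε B X (τ.head.rename (chaseWit ε B τ l))

section Chase

variable {Th : Finset TGD} {ε : Bool} {B : ℕ} {X : Set Fact}

lemma chase_model : ∀ τ ∈ Th, τ.holdsIn {F | Chase Th ε B X F} := by
  intro τ hτ σ htrig
  by_cases hfull : τ.isFull
  · exact ⟨σ, fun _ _ => rfl, Chase.full hτ hfull htrig⟩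
  · refine ⟨chaseWit ε B τ (τ.listOfAssign σ), fun v hv => ?_, Chase.nonfull _ hτ hfull ?_⟩
    · rw [chaseWit_of_mem_bodyVars hv, TGD.assignOfList_listOfAssign hv]
    · intro A hA
      rw [TGD.rename_assignOfList_listOfAssign hA]
      exact htrig A hA

lemma Chase.of_entailsS {F : Fact} (h : entailsS Th X F) : Chase Th ε B X F :=
  h {F | Chase Th ε B X F} (fun _ => Chase.base) chase_model

lemma Chase.vars {F : Fact} (h : Chase Th ε B X F) :
    ∀ a ∈ F.vars, a ∈ adomS X ∨ (B < a ∧ a % 2 = ε.toNat) := by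
  induction h with
  | base hF => exact fun a ha => Or.inl (mem_adomS_of_mem hF ha)
  | full _ hfull _ ih =>
    intro a ha
    rw [Atom.vars_rename] at ha
    obtain ⟨x, hx, rfl⟩ := Finset.mem_image.1 ha
    obtain ⟨A, hA, hxA⟩ := TGD.mem_bodyVars.1 (hfull hx)
    exact ih A hA _ (Atom.mem_vars_rename hxA)
  | @nonfull τ l _ _ _ ih =>
    intro a ha
    rw [Atom.vars_rename] at ha
    obtain ⟨x, hx, rfl⟩ := Finset.mem_image.1 ha
    rcases TGD.mem_existVars_or_bodyVars hx with hex | hbody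
    · rw [chaseWit, if_pos hex]
      exact Or.inr ⟨lt_nullCode ε B _, nullCode_mod_two ε B _⟩
    · rw [chaseWit_of_mem_bodyVars hbody]
      obtain ⟨A, hA, hxA⟩ := TGD.mem_bodyVars.1 hbody
      exact ih A hA _ (Atom.mem_vars_rename hxA)

variable {K : Set Fact}

/-- The image of the null `nullCode ε B t`, given the image `σ` of the trigger `t`. -/
noncomputable def nullImage (hK : ∀ τ ∈ Th, τ.holdsIn K) (t : TGD × List ℕ × ℕ) (σ : ℕ → ℕ) :
    ℕ :=
  if h : t.1 ∈ Th ∧ ∀ A ∈ t.1.body, A.rename σ ∈ K then (hK t.1 h.1 σ h.2).choose t.2.2 else 0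

/-- The homomorphism from the chase into a model `K`, extending `r` on the elements `≤ B`. -/
noncomputable def chaseHom (ε : Bool) (B : ℕ) (hK : ∀ τ ∈ Th, τ.holdsIn K) (r : ℕ → ℕ)
    (a : ℕ) : ℕ :=
  if h : ∃ t, a = nullCode ε B t then
    nullImage hK h.choose fun v => chaseHom ε B hK r (h.choose.1.assignOfList h.choose.2.1 v)
  else r a
termination_by a
decreasing_by exact (assignOfList_lt_nullCode ε B _ _ _ h.choose.2.2).trans_eq h.choose_spec.symm

lemma chaseHom_of_le (hK : ∀ τ ∈ Th, τ.holdsIn K) (r : ℕ → ℕ) {a : ℕ} (ha : a ≤ B) :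
    chaseHom ε B hK r a = r a := by
  rw [chaseHom, dif_neg]
  rintro ⟨t, rfl⟩
  exact (lt_nullCode ε B t).not_ge ha

lemma chaseHom_nullCode (hK : ∀ τ ∈ Th, τ.holdsIn K) (r : ℕ → ℕ) {τ : TGD} {l : List ℕ}
    {y : ℕ} (hτ : τ ∈ Th)
    (htrig : ∀ A ∈ τ.body, A.rename (fun v => chaseHom ε B hK r (τ.assignOfList l v)) ∈ K) :
    chaseHom ε B hK r (nullCode ε B (τ, l, y)) = (hK τ hτ _ htrig).choose y := by
  have h : ∃ t, nullCode ε B (τ, l, y) = nullCode ε B t := ⟨_, rfl⟩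
  rw [chaseHom, dif_pos h, nullCode_injective ε B h.choose_spec.symm, nullImage,
    dif_pos ⟨hτ, htrig⟩]

lemma Chase.rename_chaseHom_mem (hK : ∀ τ ∈ Th, τ.holdsIn K) {r : ℕ → ℕ}
    (hB : ∀ a ∈ adomS X, a ≤ B) (hr : ∀ F ∈ X, F.rename r ∈ K) {F : Fact}
    (hF : Chase Th ε B X F) : F.rename (chaseHom ε B hK r) ∈ K := by
  induction hF with
  | base hFX =>
    rw [Atom.rename_congr fun a ha => chaseHom_of_le hK r (hB a (mem_adomS_of_mem hFX ha))]
    exact hr _ hFX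
  | @full τ σ hτ hfull _ ih =>
    simp only [Atom.rename_rename] at ih ⊢
    exact TGD.head_mem_of_isFull (hK τ hτ) hfull ih
  | @nonfull τ l hτ _ _ ih =>
    simp only [Atom.rename_rename] at ih
    obtain ⟨hagree, hmem⟩ := (hK τ hτ _ ih).choose_spec
    rw [Atom.rename_rename]
    convert hmem using 1
    refine Atom.rename_congr fun x hx => ?_
    rcases TGD.mem_existVars_or_bodyVars hx with hex | hbody
    · simp only [Function.comp_apply, chaseWit, if_pos hex]
      exact chaseHom_nullCode hK r hτ ih
    · simp only [Function.comp_apply, chaseWit_of_mem_bodyVars hbody]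
      exact (hagree x hbody).symm

lemma entailsS.rename_mem {G : Fact} (hX : (adomS X).Finite) (h : entailsS Th X G)
    (hK : ∀ τ ∈ Th, τ.holdsIn K) {r : ℕ → ℕ} (hr : ∀ F ∈ X, F.rename r ∈ K) :
    G.rename r ∈ K := by
  obtain ⟨B, hB⟩ := (hX.union G.vars.finite_toSet).bddAbove
  have := (Chase.of_entailsS (ε := false) (B := B) h).rename_chaseHom_mem hK
    (fun a ha => hB (Or.inl ha)) hr
  rwa [Atom.rename_congr fun a ha => chaseHom_of_le hK r (hB (Or.inr ha))] at this

lemma Chase.entailsS (hB : ∀ a ∈ adomS X, a ≤ B) {F : Fact} (hF : Chase Th ε B X F)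
    (hvars : ↑F.vars ⊆ adomS X) : entailsS Th X F := by
  intro J hXJ hJ
  have := hF.rename_chaseHom_mem hJ hB fun G hG => by rw [Atom.rename_id]; exact hXJ hG
  rwa [Atom.rename_eq_self fun a ha => chaseHom_of_le hJ id (hB a (hvars ha))] at this

end Chase

section ChaseUnion

variable {Th : Finset TGD} {B : ℕ} {X₁ X₂ : Set Fact}

/-- The two chases use nulls of different parities. -/
lemma Chase.mem_adomS_of_mem_vars (hB₁ : ∀ a ∈ adomS X₁, a ≤ B) (hB₂ : ∀ a ∈ adomS X₂, a ≤ B)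
    {G₁ G₂ : Fact} (h₁ : Chase Th false B X₁ G₁) (h₂ : Chase Th true B X₂ G₂) {a : ℕ}
    (ha₁ : a ∈ G₁.vars) (ha₂ : a ∈ G₂.vars) : a ∈ adomS X₁ ∩ adomS X₂ := by
  rcases h₁.vars a ha₁ with h₁ | ⟨hlt₁, hpar₁⟩ <;> rcases h₂.vars a ha₂ with h₂ | ⟨hlt₂, hpar₂⟩
  · exact ⟨h₁, h₂⟩
  · exact absurd (hB₁ a h₁) (by omega)
  · exact absurd (hB₂ a h₂) (by omega)
  · simp only [Bool.toNat_false, Bool.toNat_true] at hpar₁ hpar₂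
    omega

lemma chase_union_model {S' : Finset ℕ} (hobeys : ∀ γ ∈ Th, γ.obeys S')
    (hB₁ : ∀ a ∈ adomS X₁, a ≤ B) (hB₂ : ∀ a ∈ adomS X₂, a ≤ B)
    (htr₁ : ∀ G, Chase Th false B X₁ G → ↑G.vars ⊆ adomS X₁ ∩ adomS X₂ → G ∈ X₂)
    (htr₂ : ∀ G, Chase Th true B X₂ G → ↑G.vars ⊆ adomS X₁ ∩ adomS X₂ → G.rel ∈ S' → G ∈ X₁) :
    ∀ γ ∈ Th, γ.holdsIn ({G | Chase Th false B X₁ G} ∪ {G | Chase Th true B X₂ G}) := by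
  intro γ hγ ρ htrig
  obtain ⟨A, ⟨hA, hAguard⟩, hside⟩ := hobeys γ hγ
  have hguarded : ∀ Bd ∈ γ.body, (Bd.rename ρ).vars ⊆ (A.rename ρ).vars := by
    intro Bd hBd a ha
    rw [Atom.vars_rename] at ha
    obtain ⟨x, hx, rfl⟩ := Finset.mem_image.1 ha
    exact Atom.mem_vars_rename (hAguard (TGD.mem_bodyVars.2 ⟨Bd, hBd, hx⟩))
  rcases htrig A hA with hg | hg
  · have hall : ∀ Bd ∈ γ.body, Chase Th false B X₁ (Bd.rename ρ) := by
      intro Bd hBd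
      rcases htrig Bd hBd with h | h
      · exact h
      · rcases hside Bd hBd with rfl | hrel
        · exact hg
        · exact Chase.base (htr₂ _ h (fun a ha => Chase.mem_adomS_of_mem_vars hB₁ hB₂ hg h
            (hguarded Bd hBd ha) ha) hrel)
    obtain ⟨ρ', hagree, hmem⟩ := chase_model γ hγ ρ hall
    exact ⟨ρ', hagree, Or.inl hmem⟩
  · have hall : ∀ Bd ∈ γ.body, Chase Th true B X₂ (Bd.rename ρ) := by
      intro Bd hBd
      rcases htrig Bd hBd with h | h
      · exact Chase.base (htr₁ _ h fun a ha => Chase.mem_adomS_of_mem_vars hB₁ hB₂ h hg ha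
          (hguarded Bd hBd ha))
      · exact h
    obtain ⟨ρ', hagree, hmem⟩ := chase_model γ hγ ρ hall
    exact ⟨ρ', hagree, Or.inr hmem⟩

end ChaseUnion

lemma TGD.rename_head_rename {τ : TGD} {σ' r σ'' : ℕ → ℕ}
    (hnull : ∀ y ∈ τ.existVars, r (σ' y) = σ'' y) (hbody : ∀ x ∈ τ.bodyVars, r (σ' x) = σ'' x) :
    (τ.head.rename σ').rename r = τ.head.rename σ'' := by
  rw [Atom.rename_rename]
  refine Atom.rename_congr fun x hx => ?_
  rcases TGD.mem_existVars_or_bodyVars hx with hex | hb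
  exacts [hnull x hex, hbody x hb]

def IsFactSaturated (Th : Finset TGD) (X : Set Fact) : Prop :=
  ∀ F : Fact, ↑F.vars ⊆ adomS X → entailsS Th X F → F ∈ X

lemma factSaturated.isFactSaturated {Th : Finset TGD} {I : Finset Fact}
    (h : factSaturated Th I) : IsFactSaturated Th ↑I := fun F hF hent =>
  h F (by rw [adomS_coe] at hF; exact_mod_cast hF) hent

/-- `σ'` extends the trigger `σ` of `τ` in `P` by pairwise distinct nulls outside `P`. -/
structure FreshFiring (Th : Finset TGD) (P : Set Fact) (τ : TGD) (σ σ' : ℕ → ℕ) : Prop where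
  mem : τ ∈ Th
  trig : ∀ A ∈ τ.body, A.rename σ ∈ P
  ext : ∀ x ∈ τ.bodyVars, σ' x = σ x
  fresh : ∀ y ∈ τ.existVars, σ' y ∉ adomS P
  inj : Set.InjOn σ' ↑τ.existVars

def childCore (P : Set Fact) (H : Fact) : Set Fact := insert H {G | G ∈ P ∧ G.vars ⊆ H.vars}

lemma adomS_childCore (P : Set Fact) (H : Fact) : adomS (childCore P H) ⊆ ↑H.vars := by
  rintro a ⟨F, hF | ⟨-, hsub⟩, ha⟩
  · subst hF; exact ha
  · exact hsub ha

lemma finite_childCore {P : Set Fact} (hP : P.Finite) (H : Fact) : (childCore P H).Finite :=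
  (hP.subset fun _ hG => hG.1).insert H

def sideCore (S' : Finset ℕ) (P : Set Fact) (H : Fact) : Set Fact :=
  insert H {G | G ∈ P ∧ G.rel ∈ S' ∧ G.vars ⊆ H.vars}

lemma sideCore_subset_childCore (S' : Finset ℕ) (P : Set Fact) (H : Fact) :
    sideCore S' P H ⊆ childCore P H :=
  Set.insert_subset_insert fun _ hG => ⟨hG.1, hG.2.2⟩

namespace FreshFiring

variable {Th Th' : Finset TGD} {S' : Finset ℕ} {P : Set Fact} {τ : TGD} {σ σ' : ℕ → ℕ}

lemma head_vars_cases (hf : FreshFiring Th P τ σ σ') {a : ℕ}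
    (ha : a ∈ (τ.head.rename σ').vars) :
    (∃ y ∈ τ.existVars, σ' y = a) ∨ a ∈ σ' '' ↑τ.exported ∧ a ∈ adomS P := by
  rw [Atom.vars_rename] at ha
  obtain ⟨x, hx, rfl⟩ := Finset.mem_image.1 ha
  rcases TGD.mem_existVars_or_bodyVars hx with hex | hbody
  · exact Or.inl ⟨x, hex, rfl⟩
  · refine Or.inr ⟨⟨x, Finset.mem_inter.2 ⟨hx, hbody⟩, rfl⟩, ?_⟩
    rw [hf.ext x hbody]
    exact TGD.rename_mem_adomS hf.trig hbody

lemma mem_adomS_of_mem_vars (hf : FreshFiring Th P τ σ σ') {a : ℕ}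
    (ha : a ∈ (τ.head.rename σ').vars) (hnull : ∀ y ∈ τ.existVars, σ' y ≠ a) : a ∈ adomS P := by
  rcases hf.head_vars_cases ha with ⟨y, hy, rfl⟩ | ⟨-, h⟩
  exacts [absurd rfl (hnull y hy), h]

/-- A model of `P` contains an image of the child: send the fresh nulls to witnesses of the
firing. -/
lemma entailsS_of_entailsS_childCore (hf : FreshFiring Th P τ σ σ') {G : Fact}
    (hG : entailsS Th (childCore P (τ.head.rename σ')) G) (hGP : ↑G.vars ⊆ adomS P) :
    entailsS Th P G := by
  intro J hPJ hJ
  obtain ⟨σ'', hagree, hmem⟩ := hJ τ hf.mem σ fun A hA => hPJ (hf.trig A hA)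
  obtain ⟨r, hr_null, hr_id⟩ := exists_extend_of_injOn hf.inj σ'' id
  have hr_P : ∀ a ∈ adomS P, r a = a := fun a ha => hr_id a fun ⟨y, hy, hya⟩ =>
    hf.fresh y hy (hya ▸ ha)
  have hcore : ∀ F ∈ childCore P (τ.head.rename σ'), F.rename r ∈ J := by
    rintro F (rfl | ⟨hFP, -⟩)
    · rw [TGD.rename_head_rename hr_null fun x hx => ?_]
      · exact hmem
      · rw [hf.ext x hx, hr_P _ (TGD.rename_mem_adomS hf.trig hx), hagree x hx]
    · rw [Atom.rename_eq_self fun a ha => hr_P a (mem_adomS_of_mem hFP ha)]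
      exact hPJ hFP
  have := hG.rename_mem (((τ.head.rename σ').vars.finite_toSet).subset (adomS_childCore _ _))
    hJ hcore
  rwa [Atom.rename_eq_self fun a ha => hr_P a (hGP ha)] at this

lemma mem_of_entailsS_childCore (hf : FreshFiring Th P τ σ σ')
    (hPsat : IsFactSaturated Th P) {G : Fact}
    (hG : entailsS Th (childCore P (τ.head.rename σ')) G) (hGP : ↑G.vars ⊆ adomS P) : G ∈ P :=
  hPsat G hGP (hf.entailsS_of_entailsS_childCore hG hGP)

/-- The chases of the side core and of the inherited facts glue to a model of `Th`, and the
null does not occur in the second one. -/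
lemma entailsS_sideCore (hf : FreshFiring Th P τ σ σ') (hobeys : ∀ γ ∈ Th, γ.obeys S')
    (hPsat : IsFactSaturated Th P) {F : Fact}
    (hF : entailsS Th (childCore P (τ.head.rename σ')) F)
    (hFvars : F.vars ⊆ (τ.head.rename σ').vars) (hnull : ∃ y ∈ τ.existVars, σ' y ∈ F.vars) :
    entailsS Th (sideCore S' P (τ.head.rename σ')) F := by
  set H := τ.head.rename σ'
  set Inh : Set Fact := {G | G ∈ P ∧ G.vars ⊆ H.vars}
  set B := H.vars.sup id
  have hBH : ∀ a ∈ H.vars, a ≤ B := fun a ha => Finset.le_sup (f := id) ha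
  have hCX := sideCore_subset_childCore S' P H
  have hC : adomS (sideCore S' P H) ⊆ ↑H.vars := fun a ha =>
    adomS_childCore P H (adomS_mono hCX ha)
  have hInh : adomS Inh ⊆ ↑H.vars ∩ adomS P := fun a ⟨G, hG, ha⟩ =>
    ⟨hG.2 ha, mem_adomS_of_mem hG.1 ha⟩
  have htr : ∀ G, entailsS Th (childCore P H) G → ↑G.vars ⊆ adomS Inh → G ∈ Inh :=
    fun G hG hsub => ⟨hf.mem_of_entailsS_childCore hPsat hG fun a ha => (hInh (hsub ha)).2,
      fun a ha => (hInh (hsub ha)).1⟩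
  have hBC : ∀ a ∈ adomS (sideCore S' P H), a ≤ B := fun a ha => hBH a (hC ha)
  have hBInh : ∀ a ∈ adomS Inh, a ≤ B := fun a ha => hBH a (hInh ha).1
  have htrC : ∀ G, Chase Th false B (sideCore S' P H) G →
      ↑G.vars ⊆ adomS (sideCore S' P H) ∩ adomS Inh → G ∈ Inh := fun G hG hsub =>
    htr G (entailsS_mono hCX (hG.entailsS hBC fun a ha => (hsub ha).1)) fun a ha => (hsub ha).2
  have htrInh : ∀ G, Chase Th true B Inh G → ↑G.vars ⊆ adomS Inh → G ∈ Inh := fun G hG hsub =>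
    htr G (entailsS_mono (Set.subset_insert _ _) (hG.entailsS hBInh hsub)) hsub
  have hmodel := chase_union_model hobeys hBC hBInh htrC fun G hG hsub hrel =>
    have hG' := htrInh G hG fun a ha => (hsub ha).2
    Set.mem_insert_of_mem _ ⟨hG'.1, hrel, hG'.2⟩
  obtain ⟨y, hy, hyF⟩ := hnull
  have hyH : σ' y ∈ H.vars := Atom.mem_vars_rename (TGD.mem_head_vars hy)
  rcases hF _ (Set.insert_subset (Or.inl (Chase.base (Set.mem_insert _ _)))
    fun G hG => Or.inr (Chase.base hG)) hmodel with hFC | hFInh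
  · exact hFC.entailsS hBC fun a ha => mem_adomS_of_mem (Set.mem_insert _ _) (hFvars ha)
  · rcases hFInh.vars _ hyF with h | ⟨hlt, -⟩
    · exact absurd (hInh h).2 (hf.fresh y hy)
    · exact absurd (hBH _ hyH) (by omega)

lemma mem_adomS_of_mem_exported (hf : FreshFiring Th P τ σ σ') {x : ℕ} (hx : x ∈ τ.exported) :
    σ' x ∈ adomS P := by
  have hxb := (Finset.mem_inter.1 hx).2
  rw [hf.ext x hxb]
  exact TGD.rename_mem_adomS hf.trig hxb

/-- The new fact is an isomorphic copy of the head of the TGD of `Th` obtained from `τ` by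
identifying the exported variables that `σ` identifies. -/
lemma exists_atomIso_head (hf : FreshFiring Th P τ σ σ') (hhc : homClosed Th) :
    ∃ γ ∈ Th, atomIso γ.head (τ.head.rename σ') := by
  set h : ℕ → ℕ := fun v => Function.invFunOn σ' τ.exported (σ' v)
  have hh : ∀ v ∈ τ.exported, h v ∈ τ.exported ∧ σ' (h v) = σ' v := fun v hv =>
    ⟨Function.invFunOn_mem ⟨v, hv, rfl⟩, Function.invFunOn_eq ⟨v, hv, rfl⟩⟩
  set f : ℕ → ℕ := fun v => if v ∈ τ.exported then h v else v
  have hσf : ∀ v, σ' (f v) = σ' v := fun v => by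
    by_cases hv : v ∈ τ.exported
    · simp only [f, if_pos hv, (hh v hv).2]
    · simp only [f, if_neg hv]
  have hf_eq : ∀ x ∈ τ.head.vars, ∀ y ∈ τ.head.vars, σ' x = σ' y → f x = f y := by
    intro x hx y hy hxy
    by_cases hxe : x ∈ τ.exported <;> by_cases hye : y ∈ τ.exported
    · simp only [f, h, if_pos hxe, if_pos hye, hxy]
    · exact absurd (hxy ▸ hf.mem_adomS_of_mem_exported hxe)
        (hf.fresh y (TGD.mem_existVars_of_not_mem_exported hy hye))
    · exact absurd (hxy ▸ hf.mem_adomS_of_mem_exported hye)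
        (hf.fresh x (TGD.mem_existVars_of_not_mem_exported hx hxe))
    · simp only [f, if_neg hxe, if_neg hye]
      exact hf.inj (TGD.mem_existVars_of_not_mem_exported hx hxe)
        (TGD.mem_existVars_of_not_mem_exported hy hye) hxy
  refine ⟨τ.renameExported h, hhc τ hf.mem h fun v hv => (hh v hv).1, σ', ?_, ?_⟩
  · change Set.InjOn σ' ↑(τ.head.rename f).vars
    rw [Atom.vars_rename, Finset.coe_image]
    rintro _ ⟨x, hx, rfl⟩ _ ⟨y, hy, rfl⟩ hxy
    rw [hσf, hσf] at hxy
    exact hf_eq x hx y hy hxy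
  · change τ.head.rename σ' = (τ.head.rename f).rename σ'
    rw [Atom.rename_rename]
    exact Atom.rename_congr fun v _ => (hσf v).symm

lemma exists_childish_sideCore (hf : FreshFiring Th P τ σ σ') (hst : stronglyObeys Th S')
    (hnf : ¬τ.isFull) (hP : P.Finite) :
    ∃ C : Finset Fact, ↑C = sideCore S' P (τ.head.rename σ') ∧
      childish Th S' (maxWidth Th) C := by
  set H := τ.head.rename σ'
  have hside : {G | G ∈ P ∧ G.rel ∈ S' ∧ G.vars ⊆ H.vars}.Finite := hP.subset fun _ hG => hG.1
  refine ⟨insert H hside.toFinset, by simp [sideCore], H, Finset.mem_insert_self _ _,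
    hst.2.2.2 τ hf.mem hnf, hf.exists_atomIso_head hst.2.1, fun G hG hne => ?_, ?_⟩
  · obtain ⟨-, hrel, hvars⟩ := hside.mem_toFinset.1 ((Finset.mem_insert.1 hG).resolve_left hne)
    exact ⟨hrel, hvars⟩
  · have hsub : adomF ((insert H hside.toFinset).erase H) ⊆ τ.exported.image σ' := by
      intro a ha
      obtain ⟨G, hG, haG⟩ := Finset.mem_biUnion.1 ha
      obtain ⟨hGP, -, hGH⟩ := hside.mem_toFinset.1
        ((Finset.mem_insert.1 (Finset.mem_of_mem_erase hG)).resolve_left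
          (Finset.ne_of_mem_erase hG))
      rcases hf.head_vars_cases (hGH haG) with ⟨y, hy, rfl⟩ | ⟨hexp, -⟩
      · exact absurd (mem_adomS_of_mem hGP haG) (hf.fresh y hy)
      · simpa using hexp
    calc _ ≤ (τ.exported.image σ').card := Finset.card_le_card hsub
      _ ≤ τ.width := Finset.card_image_le
      _ ≤ maxWidth Th := Finset.le_sup hf.mem

/-- Facts with a fresh null are obtained through the childish saturation, the others are
inherited from the saturated parent. -/
lemma isFactSaturated_fullClosure (hf : FreshFiring Th P τ σ σ') (hst : stronglyObeys Th S')
    (hsat : childishSaturation Th S' (maxWidth Th) Th') (hnf : ¬τ.isFull) (hP : P.Finite)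
    (hPsat : IsFactSaturated Th P) :
    IsFactSaturated Th (fullClosure Th' (childCore P (τ.head.rename σ'))) := by
  intro F hFvars hFent
  have hFX := entailsS_of_entailsS_fullClosure hsat.2.1 hFent
  have hFH : F.vars ⊆ (τ.head.rename σ').vars := fun a ha =>
    adomS_childCore _ _ (adomS_fullClosure _ _ (hFvars ha))
  by_cases hnull : ∃ y ∈ τ.existVars, σ' y ∈ F.vars
  · obtain ⟨C, hC, hchild⟩ := hf.exists_childish_sideCore hst hnf hP
    have hHC : τ.head.rename σ' ∈ C := by
      rw [← Finset.mem_coe, hC]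
      exact Set.mem_insert _ _
    have hFC : entailsF C Th' F := hsat.2.2 C hchild F
      (fun a ha => Finset.mem_biUnion.2 ⟨_, hHC, hFH ha⟩)
      (by rw [entailsF, hC]; exact hf.entailsS_sideCore hst.1 hPsat hFX hFH hnull)
    refine fun J hXJ hJ => hFC J ?_ fun τ' hτ' => hJ τ' hτ' (hsat.1 τ' hτ')
    rw [hC]
    exact (sideCore_subset_childCore _ _ _).trans hXJ
  · simp only [not_exists, not_and] at hnull
    refine subset_fullClosure _ _ (Set.mem_insert_of_mem _ ⟨hf.mem_of_entailsS_childCore hPsat hFX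
      fun a ha => hf.mem_adomS_of_mem_vars (hFH ha) fun y hy hya => hnull y hy (hya ▸ ha), hFH⟩)

end FreshFiring

/-- Invariants of the shortcut chase trees grown from a fact-saturated instance; `fresh` says
that an element not coming from the parent of `v` occurs only in the subtree of `v`. -/
structure SCTree.Valid (Th Th' : Finset TGD) (T : SCTree) : Prop where
  parent_mem : ∀ v ∈ T.nodes, v ≠ [] → v.dropLast ∈ T.nodes
  finite : ∀ v ∈ T.nodes, (T.lbl v).Finite
  saturated : ∀ v ∈ T.nodes, IsFactSaturated Th (T.lbl v)
  child : ∀ v ∈ T.nodes, v ≠ [] → ∃ τ σ σ', FreshFiring Th (T.lbl v.dropLast) τ σ σ' ∧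
    T.lbl v = fullClosure Th' (childCore (T.lbl v.dropLast) (τ.head.rename σ'))
  fresh : ∀ v ∈ T.nodes, v ≠ [] → ∀ a ∈ adomS (T.lbl v),
    a ∈ adomS (T.lbl v.dropLast) ∨ ∀ u ∈ T.nodes, ¬ v <+: u → a ∉ adomS (T.lbl u)

lemma valid_initSC {Th : Finset TGD} (Th' : Finset TGD) {I : Finset Fact}
    (hfs : factSaturated Th I) : (initSC I).Valid Th Th' := by
  have hroot : ∀ v ∈ (initSC I).nodes, v = [] := fun v hv => Finset.mem_singleton.1 hv
  refine ⟨fun v hv hne => absurd (hroot v hv) hne, fun v hv => ?_, fun v hv => ?_,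
    fun v hv hne => absurd (hroot v hv) hne, fun v hv hne => absurd (hroot v hv) hne⟩
  · simp [hroot v hv, initSC]
  · simpa [hroot v hv, initSC] using hfs.isFactSaturated

namespace SCTree.Valid

variable {Th Th' : Finset TGD} {T : SCTree}

lemma prefix_mem (hT : T.Valid Th Th') {v : List ℕ} (hv : v ∈ T.nodes) {u : List ℕ}
    (hu : u <+: v) : u ∈ T.nodes := by
  induction v using List.reverseRecOn with
  | nil => rwa [List.prefix_nil.1 hu]
  | append_singleton w k ih =>
    rcases List.prefix_concat_iff.1 hu with rfl | hu'
    · exact hv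
    · exact ih (by simpa using hT.parent_mem _ hv (by simp)) hu'

lemma mem_of_mem_parent (hT : T.Valid Th Th') {v : List ℕ} (hv : v ∈ T.nodes) (hne : v ≠ [])
    {s : Fact} (hs : s ∈ T.lbl v.dropLast) (hvars : ↑s.vars ⊆ adomS (T.lbl v)) :
    s ∈ T.lbl v := by
  obtain ⟨τ, σ, σ', -, hlbl⟩ := hT.child v hv hne
  rw [hlbl] at hvars ⊢
  exact subset_fullClosure _ _ (Set.mem_insert_of_mem _
    ⟨hs, fun a ha => adomS_childCore _ _ (adomS_fullClosure _ _ (hvars ha))⟩)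

lemma mem_parent_of_mem (hT : T.Valid Th Th') (hent : ∀ τ ∈ Th', logEntails Th τ)
    {v : List ℕ} (hv : v ∈ T.nodes) (hne : v ≠ []) {s : Fact} (hs : s ∈ T.lbl v)
    (hvars : ↑s.vars ⊆ adomS (T.lbl v.dropLast)) : s ∈ T.lbl v.dropLast := by
  obtain ⟨τ, σ, σ', hf, hlbl⟩ := hT.child v hv hne
  rw [hlbl] at hs
  exact hf.mem_of_entailsS_childCore (hT.saturated _ (hT.parent_mem v hv hne))
    (entailsS_of_mem_fullClosure hent hs) hvars

lemma mem_of_prefix (hT : T.Valid Th Th') {v : List ℕ} (hv : v ∈ T.nodes) {w : List ℕ}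
    (hw : w <+: v) {s : Fact} (hs : s ∈ T.lbl w) (hvars : ↑s.vars ⊆ adomS (T.lbl v)) :
    s ∈ T.lbl v := by
  induction v using List.reverseRecOn with
  | nil => rwa [← List.prefix_nil.1 hw]
  | append_singleton v' k ih =>
    rcases List.prefix_concat_iff.1 hw with rfl | hw'
    · exact hs
    have hne : v' ++ [k] ≠ [] := by simp
    have hv' : v' ∈ T.nodes := by simpa using hT.parent_mem _ hv hne
    have hvars' : ↑s.vars ⊆ adomS (T.lbl v') := fun a ha => by
      rcases hT.fresh _ hv hne a (hvars ha) with h | h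
      · simpa using h
      · refine absurd (mem_adomS_of_mem hs ha) (h w (hT.prefix_mem hv' hw') fun hc => ?_)
        have := hc.length_le.trans hw'.length_le
        simp at this
    exact hT.mem_of_mem_parent hv hne (by simpa using ih hv' hw' hvars') hvars

lemma mem_of_vars_subset (hT : T.Valid Th Th') (hent : ∀ τ ∈ Th', logEntails Th τ)
    {u v : List ℕ} (hu : u ∈ T.nodes) (hv : v ∈ T.nodes) {s : Fact} (hs : s ∈ T.lbl u)
    (hvars : ↑s.vars ⊆ adomS (T.lbl v)) : s ∈ T.lbl v := by
  induction u using List.reverseRecOn with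
  | nil => exact hT.mem_of_prefix hv v.nil_prefix hs hvars
  | append_singleton u' k ih =>
    by_cases huv : u' ++ [k] <+: v
    · exact hT.mem_of_prefix hv huv hs hvars
    have hne : u' ++ [k] ≠ [] := by simp
    have hu' : u' ∈ T.nodes := by simpa using hT.parent_mem _ hu hne
    have hvars' : ↑s.vars ⊆ adomS (T.lbl (u' ++ [k]).dropLast) := fun a ha => by
      rcases hT.fresh _ hu hne a (mem_adomS_of_mem hs ha) with h | h
      · exact h
      · exact absurd (hvars ha) (h v hv huv)
    exact ih hu' (by simpa using hT.mem_parent_of_mem hent hu hne hs hvars')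

end SCTree.Valid

def SCTree.addChild (T : SCTree) (v : List ℕ) (L : Set Fact) : SCTree :=
  ⟨insert v T.nodes, Function.update T.lbl v L⟩

namespace SCTree

variable {T : SCTree} {v : List ℕ} {L : Set Fact}

@[simp]
lemma lbl_addChild_self : (T.addChild v L).lbl v = L := Function.update_self _ _ _

lemma lbl_addChild_of_mem (hv : v ∉ T.nodes) {u : List ℕ} (hu : u ∈ T.nodes) :
    (T.addChild v L).lbl u = T.lbl u :=
  Function.update_of_ne (fun h : u = v => hv (h ▸ hu)) _ _

def Extends (T T' : SCTree) : Prop :=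
  T.nodes ⊆ T'.nodes ∧ ∀ u ∈ T.nodes, T'.lbl u = T.lbl u

lemma Extends.trans {T T' T'' : SCTree} (h : T.Extends T') (h' : T'.Extends T'') :
    T.Extends T'' :=
  ⟨h.1.trans h'.1, fun u hu => (h'.2 u (h.1 hu)).trans (h.2 u hu)⟩

lemma Extends.facts_subset {T T' : SCTree} (h : T.Extends T') : T.facts ⊆ T'.facts :=
  fun _ ⟨u, hu, hF⟩ => ⟨u, h.1 hu, by rwa [h.2 u hu]⟩

lemma Valid.fresh_addChild {Th Th' : Finset TGD} (hT : T.Valid Th Th') {g : List ℕ} {k : ℕ}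
    (hg : g ∈ T.nodes) (hnew : g ++ [k] ∉ T.nodes)
    (hL : ∀ a ∈ adomS L, a ∈ adomS (T.lbl g) ∨ ∀ u ∈ T.nodes, a ∉ adomS (T.lbl u))
    {v : List ℕ} (hv : v ∈ (T.addChild (g ++ [k]) L).nodes) (hne : v ≠ []) {a : ℕ}
    (ha : a ∈ adomS ((T.addChild (g ++ [k]) L).lbl v)) :
    a ∈ adomS ((T.addChild (g ++ [k]) L).lbl v.dropLast) ∨ ∀ u ∈ (T.addChild (g ++ [k]) L).nodes,
      ¬ v <+: u → a ∉ adomS ((T.addChild (g ++ [k]) L).lbl u) := by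
  rcases Finset.mem_insert.1 hv with rfl | hv
  · rw [lbl_addChild_self] at ha
    rw [show (g ++ [k]).dropLast = g by simp, lbl_addChild_of_mem hnew hg]
    refine (hL a ha).imp_right fun h u hu hnp => ?_
    rcases Finset.mem_insert.1 hu with rfl | hu
    · exact absurd List.prefix_rfl hnp
    · rw [lbl_addChild_of_mem hnew hu]; exact h u hu
  · rw [lbl_addChild_of_mem hnew hv] at ha
    rw [lbl_addChild_of_mem hnew (hT.parent_mem v hv hne)]
    refine (hT.fresh v hv hne a ha).imp_right fun h u hu hnp => ?_
    rcases Finset.mem_insert.1 hu with rfl | hu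
    · rw [lbl_addChild_self]
      rintro hc
      rcases hL a hc with hg' | hnone
      · exact h g hg (fun hvg => hnp (hvg.trans (List.prefix_append _ _))) hg'
      · exact hnone v hv ha
    · rw [lbl_addChild_of_mem hnew hu]; exact h u hu hnp

lemma Valid.addChild {Th Th' : Finset TGD} {S' : Finset ℕ} (hT : T.Valid Th Th')
    (hst : stronglyObeys Th S') (hsat : childishSaturation Th S' (maxWidth Th) Th')
    {g : List ℕ} {τ : TGD} {σ σ' : ℕ → ℕ} {k : ℕ} (hg : g ∈ T.nodes)
    (hf : FreshFiring Th (T.lbl g) τ σ σ') (hnf : ¬τ.isFull)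
    (hfresh : ∀ y ∈ τ.existVars, ∀ u ∈ T.nodes, σ' y ∉ adomS (T.lbl u))
    (hnew : g ++ [k] ∉ T.nodes) :
    (T.addChild (g ++ [k]) (fullClosure Th' (childCore (T.lbl g) (τ.head.rename σ')))).Valid
      Th Th' := by
  set L := fullClosure Th' (childCore (T.lbl g) (τ.head.rename σ'))
  have hold : ∀ u ∈ T.nodes, (T.addChild (g ++ [k]) L).lbl u = T.lbl u :=
    fun u hu => lbl_addChild_of_mem hnew hu
  have hd : (g ++ [k]).dropLast = g := by simp
  have hL : ∀ a ∈ adomS L, a ∈ adomS (T.lbl g) ∨ ∀ u ∈ T.nodes, a ∉ adomS (T.lbl u) :=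
    fun a ha => by
      rcases hf.head_vars_cases (adomS_childCore _ _ (adomS_fullClosure _ _ ha)) with
        ⟨y, hy, rfl⟩ | ⟨-, h⟩
      exacts [Or.inr (hfresh y hy), Or.inl h]
  refine ⟨fun v hv hne => ?_, fun v hv => ?_, fun v hv => ?_, fun v hv hne => ?_,
    fun v hv hne a ha => hT.fresh_addChild hg hnew hL hv hne ha⟩ <;>
    rcases Finset.mem_insert.1 hv with rfl | hv
  · exact Finset.mem_insert_of_mem (by rwa [hd])
  · exact Finset.mem_insert_of_mem (hT.parent_mem v hv hne)
  · simpa using finite_fullClosure Th' (finite_childCore (hT.finite g hg) _)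
  · simpa [hold v hv] using hT.finite v hv
  · simpa using hf.isFactSaturated_fullClosure hst hsat hnf (hT.finite g hg) (hT.saturated g hg)
  · simpa [hold v hv] using hT.saturated v hv
  · exact ⟨τ, σ, σ', by rwa [hd, hold g hg], by rw [hd, hold g hg, lbl_addChild_self]⟩
  · obtain ⟨τ₁, σ₁, σ₁', hf₁, hlbl⟩ := hT.child v hv hne
    rw [hold v hv, hold _ (hT.parent_mem v hv hne)]
    exact ⟨τ₁, σ₁, σ₁', hf₁, hlbl⟩

end SCTree

/-- The null created at stage `n` of the fair chase sequence for the existential variable `y`;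
these are pairwise distinct and exceed the bound `B` of the initial domain. -/
def seqNull (B n y : ℕ) : ℕ := B + 1 + Nat.pair n y

def seqWit (B n : ℕ) (τ : TGD) (l : List ℕ) : ℕ → ℕ :=
  fun x => if x ∈ τ.existVars then seqNull B n x else τ.assignOfList l x

lemma seqWit_of_mem_bodyVars {B n : ℕ} {τ : TGD} {l : List ℕ} {x : ℕ} (hx : x ∈ τ.bodyVars) :
    seqWit B n τ l x = τ.assignOfList l x :=
  if_neg fun h => TGD.not_mem_bodyVars h hx

lemma seqWit_injOn (B n : ℕ) (τ : TGD) (l : List ℕ) : Set.InjOn (seqWit B n τ l) ↑τ.existVars := by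
  intro x hx y hy hxy
  simp only [seqWit, Finset.mem_coe.1 hx, Finset.mem_coe.1 hy, if_true, seqNull] at hxy
  exact (Nat.pair_eq_pair.1 (show Nat.pair n x = Nat.pair n y by omega)).2

/-- Stage `n` of the fair chase sequence fires, with child index `n`, the non-full TGD and
body assignment coded by the second component of `n` at the node coded there, if possible. -/
noncomputable def scStepFn (Th Th' : Finset TGD) (B n : ℕ) (T : SCTree) : SCTree :=
  match Encodable.decode (α := List ℕ × TGD × List ℕ) n.unpair.2 with
  | none => T
  | some (v, τ, l) =>
    if v ∈ T.nodes ∧ τ ∈ Th ∧ ¬τ.isFull ∧ v ++ [n] ∉ T.nodes ∧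
        ∀ A ∈ τ.body, A.rename (τ.assignOfList l) ∈ T.lbl v then
      T.addChild (v ++ [n]) (fullClosure Th' (childCore (T.lbl v) (τ.head.rename (seqWit B n τ l))))
    else T

lemma scStepFn_cases (Th Th' : Finset TGD) (B n : ℕ) (T : SCTree) :
    scStepFn Th Th' B n T = T ∨ ∃ v τ l, v ∈ T.nodes ∧ τ ∈ Th ∧ ¬τ.isFull ∧ v ++ [n] ∉ T.nodes ∧
      (∀ A ∈ τ.body, A.rename (τ.assignOfList l) ∈ T.lbl v) ∧
      scStepFn Th Th' B n T = T.addChild (v ++ [n])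
        (fullClosure Th' (childCore (T.lbl v) (τ.head.rename (seqWit B n τ l)))) := by
  unfold scStepFn
  rcases Encodable.decode (α := List ℕ × TGD × List ℕ) n.unpair.2 with _ | ⟨v, τ, l⟩
  · exact Or.inl rfl
  · dsimp only
    split_ifs with h
    · exact Or.inr ⟨v, τ, l, h.1, h.2.1, h.2.2.1, h.2.2.2.1, h.2.2.2.2, rfl⟩
    · exact Or.inl rfl

noncomputable def scSeq (Th Th' : Finset TGD) (I : Finset Fact) : ℕ → SCTree
  | 0 => initSC I
  | n + 1 => scStepFn Th Th' ((adomF I).sup id) n (scSeq Th Th' I n)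

section Sequence

variable {Th Th' : Finset TGD} {I : Finset Fact}

structure SeqInv (Th Th' : Finset TGD) (I : Finset Fact) (n : ℕ) (T : SCTree) : Prop where
  valid : T.Valid Th Th'
  names : ∀ u ∈ T.nodes, ∀ a ∈ adomS (T.lbl u),
    a ≤ (adomF I).sup id ∨ ∃ m < n, ∃ y, a = seqNull ((adomF I).sup id) m y
  reach : Relation.ReflTransGen (SCStep Th Th') (initSC I) T

lemma seqInv_zero (hfs : factSaturated Th I) : SeqInv Th Th' I 0 (scSeq Th Th' I 0) := by
  refine ⟨valid_initSC Th' hfs, fun u hu a ha => ?_, .refl⟩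
  obtain rfl := Finset.mem_singleton.1 hu
  have ha' : a ∈ adomS ↑I := by simpa [scSeq, initSC] using ha
  rw [adomS_coe] at ha'
  exact Or.inl (Finset.le_sup (f := id) ha')

lemma seqInv_succ {S' : Finset ℕ} (hst : stronglyObeys Th S')
    (hsat : childishSaturation Th S' (maxWidth Th) Th') {n : ℕ}
    (h : SeqInv Th Th' I n (scSeq Th Th' I n)) :
    SeqInv Th Th' I (n + 1) (scSeq Th Th' I (n + 1)) := by
  set B := (adomF I).sup id
  set T := scSeq Th Th' I n
  change SeqInv Th Th' I (n + 1) (scStepFn Th Th' B n T)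
  rcases scStepFn_cases Th Th' B n T with heq | ⟨v, τ, l, hv, hτ, hnf, hnew, htrig, heq⟩
  · rw [heq]
    exact ⟨h.valid, fun u hu a ha => (h.names u hu a ha).imp_right
      fun ⟨m, hm, hy⟩ => ⟨m, by omega, hy⟩, h.reach⟩
  have hfresh : ∀ y ∈ τ.existVars, ∀ u ∈ T.nodes, seqWit B n τ l y ∉ adomS (T.lbl u) := by
    intro y hy u hu ha
    simp only [seqWit, if_pos hy, seqNull] at ha
    rcases h.names u hu _ ha with hle | ⟨m, hm, y', hm'⟩
    · omega
    · have := (Nat.pair_eq_pair.1 (show Nat.pair n y = Nat.pair m y' by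
        simp only [seqNull] at hm'; omega)).1
      omega
  have hf : FreshFiring Th (T.lbl v) τ (τ.assignOfList l) (seqWit B n τ l) :=
    ⟨hτ, htrig, fun x hx => seqWit_of_mem_bodyVars hx, fun y hy => hfresh y hy v hv,
      seqWit_injOn B n τ l⟩
  rw [heq]
  refine ⟨h.valid.addChild hst hsat hv hf hnf hfresh hnew, fun u hu a ha => ?_,
    h.reach.tail (SCStep.step T v τ _ _ n hv hτ hnf htrig (fun x hx => seqWit_of_mem_bodyVars hx)
      (fun y hy u hu F hF hyF => hfresh y hy u hu (mem_adomS_of_mem hF hyF))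
      (seqWit_injOn B n τ l) hnew)⟩
  rcases Finset.mem_insert.1 hu with rfl | hu
  · rw [SCTree.lbl_addChild_self] at ha
    rcases hf.head_vars_cases (adomS_childCore _ _ (adomS_fullClosure _ _ ha)) with
      ⟨y, hy, rfl⟩ | ⟨-, ha⟩
    · simp only [seqWit, if_pos hy]
      exact Or.inr ⟨n, by omega, y, rfl⟩
    · exact (h.names v hv a ha).imp_right fun ⟨m, hm, hy⟩ => ⟨m, by omega, hy⟩
  · rw [SCTree.lbl_addChild_of_mem hnew hu] at ha
    exact (h.names u hu a ha).imp_right fun ⟨m, hm, hy⟩ => ⟨m, by omega, hy⟩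

lemma seqInv {S' : Finset ℕ} (hst : stronglyObeys Th S')
    (hsat : childishSaturation Th S' (maxWidth Th) Th') (hfs : factSaturated Th I) (n : ℕ) :
    SeqInv Th Th' I n (scSeq Th Th' I n) := by
  induction n with
  | zero => exact seqInv_zero hfs
  | succ n ih => exact seqInv_succ hst hsat ih

end Sequence

lemma extends_scStepFn (Th Th' : Finset TGD) (B n : ℕ) (T : SCTree) :
    T.Extends (scStepFn Th Th' B n T) := by
  rcases scStepFn_cases Th Th' B n T with heq | ⟨v, τ, l, -, -, -, hnew, -, heq⟩ <;> rw [heq]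
  · exact ⟨subset_rfl, fun _ _ => rfl⟩
  · exact ⟨Finset.subset_insert _ _, fun u hu => SCTree.lbl_addChild_of_mem hnew hu⟩

lemma scSeq_extends (Th Th' : Finset TGD) (I : Finset Fact) {m n : ℕ} (h : m ≤ n) :
    (scSeq Th Th' I m).Extends (scSeq Th Th' I n) := by
  induction n, h using Nat.le_induction with
  | base => exact ⟨subset_rfl, fun _ _ => rfl⟩
  | succ n _ ih => exact ih.trans (extends_scStepFn Th Th' _ n _)

lemma lt_of_mem_scSeq (Th Th' : Finset TGD) (I : Finset Fact) {n : ℕ} {u : List ℕ}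
    (hu : u ∈ (scSeq Th Th' I n).nodes) {j : ℕ} (hj : j ∈ u) : j < n := by
  induction n generalizing u with
  | zero => simp [Finset.mem_singleton.1 hu] at hj
  | succ n ih =>
    rcases scStepFn_cases Th Th' _ n (scSeq Th Th' I n) with heq | ⟨v, τ, l, hv, -, -, -, -, heq⟩
    · have := ih (by rwa [scSeq, heq] at hu) hj
      omega
    · rw [scSeq, heq] at hu
      rcases Finset.mem_insert.1 hu with rfl | hu
      · rcases List.mem_append.1 hj with hj | hj
        · have := ih hv hj; omega
        · rw [List.mem_singleton] at hj
          omega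
      · have := ih hu hj; omega

def seqLimit (Th Th' : Finset TGD) (I : Finset Fact) : Set Fact :=
  {F | ∃ n, F ∈ (scSeq Th Th' I n).facts}

section Limit

variable {Th Th' : Finset TGD} {S' : Finset ℕ} {I : Finset Fact}

lemma monotone_scSeq_facts : Monotone fun n => (scSeq Th Th' I n).facts :=
  fun _ _ h => (scSeq_extends Th Th' I h).facts_subset

lemma subset_seqLimit : ↑I ⊆ seqLimit Th Th' I :=
  fun F hF => ⟨0, [], Finset.mem_singleton_self _, by simpa [scSeq, initSC] using hF⟩

lemma exists_head_mem_seqLimit {m : ℕ} {v : List ℕ} {τ : TGD} {l : List ℕ}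
    (hv : v ∈ (scSeq Th Th' I m).nodes) (hτ : τ ∈ Th) (hnf : ¬τ.isFull)
    (htrig : ∀ A ∈ τ.body, A.rename (τ.assignOfList l) ∈ (scSeq Th Th' I m).lbl v) :
    ∃ σ' : ℕ → ℕ, (∀ x ∈ τ.bodyVars, σ' x = τ.assignOfList l x) ∧
      τ.head.rename σ' ∈ seqLimit Th Th' I := by
  set n := Nat.pair m (Encodable.encode (v, τ, l))
  obtain ⟨hnodes, hlbl⟩ := scSeq_extends Th Th' I (Nat.left_le_pair m (Encodable.encode (v, τ, l)))
  have hnew : v ++ [n] ∉ (scSeq Th Th' I n).nodes := fun h =>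
    (lt_of_mem_scSeq Th Th' I h (List.mem_append_right _ (List.mem_singleton_self n))).false
  have hfire : scSeq Th Th' I (n + 1) = (scSeq Th Th' I n).addChild (v ++ [n])
      (fullClosure Th' (childCore ((scSeq Th Th' I n).lbl v)
        (τ.head.rename (seqWit ((adomF I).sup id) n τ l)))) := by
    rw [scSeq, scStepFn, show n.unpair.2 = Encodable.encode (v, τ, l) by simp [n],
      Encodable.encodek]
    exact if_pos ⟨hnodes hv, hτ, hnf, hnew, fun A hA => hlbl v hv ▸ htrig A hA⟩
  refine ⟨seqWit ((adomF I).sup id) n τ l, fun x hx => seqWit_of_mem_bodyVars hx, n + 1,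
    v ++ [n], ?_, ?_⟩
  · rw [hfire]
    exact Finset.mem_insert_self _ _
  · rw [hfire, SCTree.lbl_addChild_self]
    exact subset_fullClosure _ _ (Set.mem_insert _ _)

lemma seqLimit_model (hst : stronglyObeys Th S')
    (hsat : childishSaturation Th S' (maxWidth Th) Th') (hfs : factSaturated Th I) :
    ∀ γ ∈ Th, γ.holdsIn (seqLimit Th Th' I) := by
  intro γ hγ ρ htrig
  obtain ⟨N, hN⟩ := exists_forall_mem_of_monotone monotone_scSeq_facts _ htrig
  obtain ⟨A, ⟨hA, hAguard⟩, -⟩ := hst.1 γ hγ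
  obtain ⟨u, hu, hAu⟩ := hN _ hA
  have hT := (seqInv hst hsat hfs N).valid
  have hbody : ∀ Bd ∈ γ.body, Bd.rename ρ ∈ (scSeq Th Th' I N).lbl u := by
    intro Bd hBd
    obtain ⟨w, hw, hBw⟩ := hN _ hBd
    refine hT.mem_of_vars_subset hsat.2.1 hw hu hBw fun a ha => ?_
    rw [Finset.mem_coe, Atom.vars_rename] at ha
    obtain ⟨x, hx, rfl⟩ := Finset.mem_image.1 ha
    exact mem_adomS_of_mem hAu (Atom.mem_vars_rename (hAguard (TGD.mem_bodyVars.2 ⟨Bd, hBd, hx⟩)))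
  by_cases hfull : γ.isFull
  · refine ⟨ρ, fun _ _ => rfl, N, u, hu, hT.saturated u hu _ (fun a ha => ?_)
      (entailsS_head_of_isFull hγ hfull hbody)⟩
    rw [Finset.mem_coe, Atom.vars_rename] at ha
    obtain ⟨x, hx, rfl⟩ := Finset.mem_image.1 ha
    exact TGD.rename_mem_adomS hbody (hfull hx)
  · obtain ⟨σ', hagree, hmem⟩ := exists_head_mem_seqLimit hu hγ hfull
      (l := γ.listOfAssign ρ) fun Bd hBd => by
        rw [TGD.rename_assignOfList_listOfAssign hBd]; exact hbody Bd hBd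
    exact ⟨σ', fun x hx => (hagree x hx).trans (TGD.assignOfList_listOfAssign hx), hmem⟩

end Limit

lemma TGD.holdsIn_preimage {τ : TGD} (hfull : τ.isFull) {J : Set Fact} (hJ : τ.holdsIn J)
    (φ : ℕ → ℕ) : τ.holdsIn {G | G.rename φ ∈ J} := fun ρ htrig =>
  ⟨ρ, fun _ _ => rfl, by
    simpa [Atom.rename_rename] using TGD.head_mem_of_isFull hJ hfull (σ := φ ∘ ρ)
      fun A hA => by simpa [Atom.rename_rename] using htrig A hA⟩

section Soundness

variable {Th Th' : Finset TGD} {J : Set Fact}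

lemma SCStep.exists_rename_mem {T T' : SCTree} (hstep : SCStep Th Th' T T')
    (hent : ∀ τ ∈ Th', logEntails Th τ) (hJ : ∀ τ ∈ Th, τ.holdsIn J) {φ : ℕ → ℕ}
    (hφ : ∀ F ∈ T.facts, F.rename φ ∈ J) : ∃ φ' : ℕ → ℕ, ∀ F ∈ T'.facts, F.rename φ' ∈ J := by
  cases hstep with | step g τ σ σ' k hg hτ _ htrig hext hfresh hinj hnew => ?_
  change ∃ φ', ∀ F ∈ (T.addChild (g ++ [k])
    (fullClosure Th' (childCore (T.lbl g) (τ.head.rename σ')))).facts, F.rename φ' ∈ J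
  obtain ⟨σ'', hagree, hhead⟩ := hJ τ hτ (φ ∘ σ) fun A hA => by
    simpa [Atom.rename_rename] using hφ _ ⟨g, hg, htrig A hA⟩
  obtain ⟨φ', hnull, hold⟩ := exists_extend_of_injOn hinj σ'' φ
  have hφ' : ∀ u ∈ T.nodes, ∀ F ∈ T.lbl u, F.rename φ' = F.rename φ :=
    fun u hu F hF => Atom.rename_congr fun a ha => hold a fun ⟨y, hy, hya⟩ =>
      hfresh y hy u hu F hF (hya ▸ ha)
  have hcore : childCore (T.lbl g) (τ.head.rename σ') ⊆ {G | G.rename φ' ∈ J} := by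
    rintro F (rfl | ⟨hF, -⟩)
    · change (τ.head.rename σ').rename φ' ∈ J
      refine (TGD.rename_head_rename hnull fun x hx => ?_) ▸ hhead
      obtain ⟨A, hA, hxA⟩ := TGD.mem_bodyVars.1 hx
      rw [hext x hx, hagree x hx]
      exact hold _ fun ⟨y, hy, hyx⟩ => hfresh y hy g hg _ (htrig A hA)
        (hyx ▸ Atom.mem_vars_rename hxA)
    · change F.rename φ' ∈ J
      exact (hφ' g hg F hF).symm ▸ hφ F ⟨g, hg, hF⟩
  refine ⟨φ', fun F ⟨u, hu, hF⟩ => ?_⟩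
  rcases Finset.mem_insert.1 hu with rfl | hu
  · rw [SCTree.lbl_addChild_self] at hF
    exact fullClosure_subset hcore (fun τ' hτ' hfull => TGD.holdsIn_preimage hfull
      (hent τ' hτ' J hJ) φ') hF
  · rw [SCTree.lbl_addChild_of_mem hnew hu] at hF
    exact (hφ' u hu F hF).symm ▸ hφ F ⟨u, hu, hF⟩

lemma exists_rename_mem_of_reflTransGen {I : Finset Fact} {T : SCTree}
    (hreach : Relation.ReflTransGen (SCStep Th Th') (initSC I) T)
    (hent : ∀ τ ∈ Th', logEntails Th τ) (hIJ : ↑I ⊆ J) (hJ : ∀ τ ∈ Th, τ.holdsIn J) :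
    ∃ φ : ℕ → ℕ, ∀ F ∈ T.facts, F.rename φ ∈ J := by
  induction hreach with
  | refl =>
    refine ⟨id, fun F ⟨u, hu, hF⟩ => ?_⟩
    obtain rfl := Finset.mem_singleton.1 hu
    rw [Atom.rename_id]
    exact hIJ (by simpa [initSC] using hF)
  | tail _ hstep ih =>
    obtain ⟨φ, hφ⟩ := ih
    exact hstep.exists_rename_mem hent hJ hφ

end Soundness

/-- completeness of the shortcut chase (Proposition 8.4). Let `Σ` be a
finite set of single-headed GTGDs strongly obeying a side signature `S'`, and let `Σ'` be
any childish saturation of `Σ`. Then the shortcut chase based on `Σ'` emulates `Σ` on any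
`Σ`-fact-saturated instance: for each `Σ`-fact-saturated instance `I` and each Boolean
conjunctive query `Q`, `I, Σ ⊨ Q` if and only if `Q` holds in an instance produced from
`I` by a shortcut chase sequence starting at `I`. -/
theorem shortcut_chase_complete (Th : Finset TGD) (S' : Finset ℕ) (Th' : Finset TGD)
    (hst : stronglyObeys Th S')
    (hsat : childishSaturation Th S' (maxWidth Th) Th')
    (I : Finset Fact) (hfs : factSaturated Th I) (Q : CQ) :
    entailsQ I Th Q ↔
      ∃ T : SCTree, Relation.ReflTransGen (SCStep Th Th') (initSC I) T ∧
        CQholds Q T.facts := by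
  constructor
  · intro hQ
    obtain ⟨σ, hσ⟩ := hQ _ subset_seqLimit (seqLimit_model hst hsat hfs)
    obtain ⟨N, hN⟩ := exists_forall_mem_of_monotone monotone_scSeq_facts _ hσ
    exact ⟨scSeq Th Th' I N, (seqInv hst hsat hfs N).reach, σ, hN⟩
  · rintro ⟨T, hreach, σ, hσ⟩ J hIJ hJ
    obtain ⟨φ, hφ⟩ := exists_rename_mem_of_reflTransGen hreach hsat.2.1 hIJ hJ
    exact ⟨φ ∘ σ, fun A hA => by simpa [Atom.rename_rename] using hφ _ (hσ A hA)⟩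

end GTGDPaper
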